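/- arXiv:2502.14188 — 4 statements merged into one kernel-verified Lean document; each statement's English description precedes it below -/
import Mathlib

section
/- Let n, m be positive integers and let P₁ : Θ → Sym(n,ℝ), P₂ : Θ → ℝ^{n×m}, P₃ : Θ → Sym(m,ℝ) be measurable and essentially bounded families of real matrices. Then the following are equivalent: (i) the family P : ℓ ↦ [[P₁(ℓ), P₂(ℓ)], [P₂(ℓ)ᵀ, P₃(ℓ)]] of symmetric (n+m)×(n+m) matrices is uniformly positive; (ii) P₃ is uniformly positive and the μ-a.e. defined family ℓ ↦ P₁(ℓ) − P₂(ℓ)·P₃(ℓ)⁻¹·P₂(ℓ)ᵀ is uniformly positive; (iii) P₁ is uniformly positive and the μ-a.e. defined family ℓ ↦ P₃(ℓ) − P₂(ℓ)ᵀ·P₁(ℓ)⁻¹·P₂(ℓ) is uniformly positive. -/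
open MeasureTheory Matrix
open scoped Matrix.Norms.L2Operator

noncomputable section

/-- A measurable family of symmetric matrices is *uniformly positive* if there is `ξ > 0`
such that `P ℓ - ξ • 1` is positive semidefinite for `μ`-almost every `ℓ`. -/
def UnifPos {Θ : Type*} [MeasurableSpace Θ] (μ : Measure Θ) {k : Type*} [Fintype k]
    [DecidableEq k] (P : Θ → Matrix k k ℝ) : Prop :=
  ∃ ξ : ℝ, 0 < ξ ∧ ∀ᵐ ℓ ∂μ, (P ℓ - ξ • 1).PosSemidef

/-- A measurable family of matrices is *essentially bounded* if there is `c > 0` bounding the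
spectral norm `μ`-almost everywhere. -/
def EssBdd {Θ : Type*} [MeasurableSpace Θ] (μ : Measure Θ) {k l : Type*} [Fintype k] [Fintype l]
    [DecidableEq l] (P : Θ → Matrix k l ℝ) : Prop :=
  ∃ c : ℝ, 0 < c ∧ ∀ᵐ ℓ ∂μ, ‖P ℓ‖ ≤ c

set_option linter.unusedSectionVars false

namespace SchurAux

variable {k l : Type*} [Fintype k] [Fintype l] [DecidableEq k] [DecidableEq l]

lemma smul_psd {a : ℝ} (ha : 0 ≤ a) {X : Matrix k k ℝ} (hX : X.PosSemidef) :
    (a • X).PosSemidef := by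
  refine .of_dotProduct_mulVec_nonneg ?_ fun x => ?_
  · rw [IsHermitian, conjTranspose_smul, hX.1.eq, star_trivial]
  · rw [smul_mulVec, dotProduct_smul, smul_eq_mul]
    exact mul_nonneg ha (hX.dotProduct_mulVec_nonneg x)

lemma psd_smul_one {a : ℝ} (ha : 0 ≤ a) : (a • (1 : Matrix k k ℝ)).PosSemidef :=
  smul_psd ha .one

lemma posdef_smul_one {a : ℝ} (ha : 0 < a) : (a • (1 : Matrix k k ℝ)).PosDef := by
  have : a • (1 : Matrix k k ℝ) = diagonal (fun _ => a) := by
    ext i j; by_cases h : i = j <;> simp [h, Matrix.one_apply, Matrix.diagonal]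
  rw [this]
  exact (posDef_diagonal_iff).mpr fun _ => ha

lemma conj_psd {X : Matrix k k ℝ} (hX : X.PosSemidef) (B : Matrix k l ℝ) :
    (Bᵀ * X * B).PosSemidef := by
  simpa [conjTranspose_eq_transpose_of_trivial] using hX.conjTranspose_mul_mul_same B

lemma psd_mul_transpose (B : Matrix k l ℝ) : (B * Bᵀ).PosSemidef := by
  simpa [conjTranspose_eq_transpose_of_trivial] using posSemidef_self_mul_conjTranspose B

end SchurAux

set_option linter.unusedSectionVars false

namespace SchurAux2
open SchurAux
variable {k l : Type*} [Fintype k] [Fintype l] [DecidableEq k] [DecidableEq l]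

lemma blockDiag_psd {A : Matrix k k ℝ} {D : Matrix l l ℝ} (hA : A.PosSemidef)
    (hD : D.PosSemidef) : (fromBlocks A 0 0 D).PosSemidef := by
  refine .of_dotProduct_mulVec_nonneg ?_ fun x => ?_
  · show _ = _
    rw [fromBlocks_conjTranspose, hA.1.eq, hD.1.eq, conjTranspose_zero, conjTranspose_zero]
  · rw [← Sum.elim_comp_inl_inr x, fromBlocks_mulVec]
    simp only [Matrix.zero_mulVec, add_zero, zero_add, Function.star_sumElim,
      sumElim_dotProduct_sumElim]
    exact add_nonneg (hA.dotProduct_mulVec_nonneg _) (hD.dotProduct_mulVec_nonneg _)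

lemma dot_sq (v : k → ℝ) : v ⬝ᵥ v = ‖(WithLp.equiv 2 (k → ℝ)).symm v‖ ^ 2 := by
  rw [EuclideanSpace.norm_eq, Real.sq_sqrt (by positivity)]
  simp [dotProduct, sq]

lemma norm_to_psd {A : Matrix k l ℝ} {c : ℝ} (hc : 0 ≤ c) (h : ‖A‖ ≤ c) :
    ((c ^ 2) • 1 - Aᵀ * A).PosSemidef := by
  have hAA : (Aᵀ * A).IsHermitian := by
    simpa [conjTranspose_eq_transpose_of_trivial] using
      (posSemidef_conjTranspose_mul_self A).1
  refine .of_dotProduct_mulVec_nonneg (((psd_smul_one (by positivity)).1).sub hAA) fun x => ?_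
  have hx : x ⬝ᵥ ((Aᵀ * A) *ᵥ x) = (A *ᵥ x) ⬝ᵥ (A *ᵥ x) := by
    rw [← Matrix.mulVec_mulVec, dotProduct_mulVec, vecMul_transpose]
  have hnorm : ‖(WithLp.equiv 2 (k → ℝ)).symm (A *ᵥ x)‖ ≤
      c * ‖(WithLp.equiv 2 (l → ℝ)).symm x‖ := by
    have := A.l2_opNorm_mulVec ((WithLp.equiv 2 (l → ℝ)).symm x)
    calc ‖(WithLp.equiv 2 (k → ℝ)).symm (A *ᵥ x)‖
        = ‖(EuclideanSpace.equiv k ℝ).symm (A *ᵥ ((WithLp.equiv 2 (l → ℝ)).symm x))‖ := rfl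
      _ ≤ ‖A‖ * ‖(WithLp.equiv 2 (l → ℝ)).symm x‖ := A.l2_opNorm_mulVec _
      _ ≤ c * ‖(WithLp.equiv 2 (l → ℝ)).symm x‖ := by
          exact mul_le_mul_of_nonneg_right h (norm_nonneg _)
  rw [star_trivial, Matrix.sub_mulVec, dotProduct_sub, smul_mulVec, one_mulVec,
    dotProduct_smul, hx, smul_eq_mul, sub_nonneg, dot_sq, dot_sq]
  calc ‖(WithLp.equiv 2 (k → ℝ)).symm (A *ᵥ x)‖ ^ 2
      ≤ (c * ‖(WithLp.equiv 2 (l → ℝ)).symm x‖) ^ 2 := by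
        exact pow_le_pow_left₀ (norm_nonneg _) hnorm 2
    _ = c ^ 2 * ‖(WithLp.equiv 2 (l → ℝ)).symm x‖ ^ 2 := by ring

end SchurAux2

namespace SchurAux3
open SchurAux SchurAux2
variable {k l : Type*} [Fintype k] [Fintype l] [DecidableEq k] [DecidableEq l]

lemma posdef_of_sub_psd {P : Matrix k k ℝ} {ξ : ℝ} (hξ : 0 < ξ)
    (h : (P - ξ • 1).PosSemidef) : P.PosDef := by
  have e : ξ • (1 : Matrix k k ℝ) + (P - ξ • 1) = P := by abel
  have := (posdef_smul_one (k := k) hξ).add_posSemidef h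
  rwa [e] at this

open scoped MatrixOrder in
lemma inv_sq_bound {P : Matrix k k ℝ} {ξ : ℝ} (hξ : 0 < ξ)
    (h : (P - ξ • 1).PosSemidef) :
    (ξ⁻¹ ^ 2 • 1 - P⁻¹ * P⁻¹).PosSemidef := by
  have hPd : P.PosDef := posdef_of_sub_psd hξ h
  have hdet : IsUnit P.det := isUnit_iff_isUnit_det P |>.mp hPd.isUnit
  have hR : P⁻¹.PosDef := hPd.inv
  set R := P⁻¹ with hRdef
  have hRdet : IsUnit R.det := isUnit_iff_isUnit_det R |>.mp hR.isUnit
  set T := CFC.sqrt R with hTdef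
  have hTT : T * T = R := CFC.sqrt_mul_sqrt_self R hR.posSemidef.nonneg
  have hTherm : Tᴴ = T := (CFC.sqrt_nonneg R).posSemidef.1.eq
  have hTsymm : Tᵀ = T := by
    rw [← conjTranspose_eq_transpose_of_trivial, hTherm]
  have hTdet : IsUnit T.det := by
    have : T.det * T.det = R.det := by rw [← det_mul, hTT]
    exact isUnit_of_mul_isUnit_left (by rwa [this])
  -- T * P * T = 1
  have hTPT : T * P * T = 1 := by
    have hPinv : P = R⁻¹ := by rw [hRdef, Matrix.nonsing_inv_nonsing_inv P hdet]
    rw [hPinv, ← hTT, Matrix.mul_inv_rev, ← Matrix.mul_assoc, Matrix.mul_assoc (T * T⁻¹),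
      Matrix.nonsing_inv_mul T hTdet, Matrix.mul_one, Matrix.mul_nonsing_inv T hTdet]
  -- 1 - ξ • R is PSD
  have h1 : ((1 : Matrix k k ℝ) - ξ • R).PosSemidef := by
    have := conj_psd h T
    have e : Tᵀ * (P - ξ • 1) * T = 1 - ξ • R := by
      rw [hTsymm, Matrix.mul_sub, Matrix.sub_mul, hTPT, Matrix.mul_smul,
        Matrix.smul_mul, Matrix.mul_one, hTT]
    rwa [e] at this
  -- ξ⁻¹ • 1 - R is PSD
  have h2 : (ξ⁻¹ • (1 : Matrix k k ℝ) - R).PosSemidef := by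
    have := smul_psd (le_of_lt (inv_pos.mpr hξ)) h1
    have e : ξ⁻¹ • ((1 : Matrix k k ℝ) - ξ • R) = ξ⁻¹ • 1 - R := by
      rw [smul_sub, smul_smul, inv_mul_cancel₀ hξ.ne', one_smul]
    rwa [e] at this
  -- ξ⁻¹ • R - R * R is PSD
  have h3 : (ξ⁻¹ • R - R * R).PosSemidef := by
    have := conj_psd h2 T
    have hTRT : T * R * T = R * R := by
      simp only [← hTT, Matrix.mul_assoc]
    have e : Tᵀ * (ξ⁻¹ • (1 : Matrix k k ℝ) - R) * T = ξ⁻¹ • R - R * R := by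
      rw [hTsymm, Matrix.mul_sub, Matrix.sub_mul, Matrix.mul_smul, Matrix.smul_mul,
        Matrix.mul_one, hTT, hTRT]
    rwa [e] at this
  -- ξ⁻¹ • (ξ⁻¹ • 1 - R) = ξ⁻¹^2 • 1 - ξ⁻¹ • R
  have h4 : (ξ⁻¹ ^ 2 • (1 : Matrix k k ℝ) - ξ⁻¹ • R).PosSemidef := by
    have := smul_psd (le_of_lt (inv_pos.mpr hξ)) h2
    have e : ξ⁻¹ • (ξ⁻¹ • (1 : Matrix k k ℝ) - R) = ξ⁻¹ ^ 2 • 1 - ξ⁻¹ • R := by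
      rw [smul_sub, smul_smul, ← sq]
    rwa [e] at this
  have := h4.add h3
  have e : (ξ⁻¹ ^ 2 • (1 : Matrix k k ℝ) - ξ⁻¹ • R) + (ξ⁻¹ • R - R * R)
      = ξ⁻¹ ^ 2 • 1 - R * R := by abel
  rwa [e] at this

end SchurAux3

namespace SchurAux4
open SchurAux SchurAux2 SchurAux3
variable {n m : Type*} [Fintype n] [Fintype m] [DecidableEq n] [DecidableEq m]

lemma conj_psd' {X : Matrix k k ℝ} [Fintype k] (hX : X.PosSemidef) (B : Matrix l k ℝ)
    [Fintype l] : (B * X * Bᵀ).PosSemidef := by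
  simpa [conjTranspose_eq_transpose_of_trivial] using hX.mul_mul_conjTranspose_same B

lemma block_sub_smul (P₁ : Matrix n n ℝ) (P₂ : Matrix n m ℝ) (P₃ : Matrix m m ℝ) (ξ : ℝ) :
    fromBlocks P₁ P₂ P₂ᵀ P₃ - ξ • (1 : Matrix (n ⊕ m) (n ⊕ m) ℝ)
      = fromBlocks (P₁ - ξ • 1) P₂ P₂ᵀ (P₃ - ξ • 1) := by
  rw [← fromBlocks_one, fromBlocks_smul, sub_eq_add_neg, fromBlocks_neg, fromBlocks_add]
  simp [sub_eq_add_neg]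

lemma fwd (P₁ : Matrix n n ℝ) (P₂ : Matrix n m ℝ) (P₃ : Matrix m m ℝ) (h3symm : P₃.IsSymm)
    {ξ : ℝ} (hξ : 0 < ξ) (H : (fromBlocks P₁ P₂ P₂ᵀ P₃ - ξ • 1).PosSemidef) :
    (P₃ - ξ • 1).PosSemidef ∧ (P₁ - P₂ * P₃⁻¹ * P₂ᵀ - ξ • 1).PosSemidef := by
  have h3 : (P₃ - ξ • 1).PosSemidef := by
    have H' := H
    rw [block_sub_smul] at H'
    have := H'.submatrix Sum.inr
    have e : (fromBlocks (P₁ - ξ • 1) P₂ P₂ᵀ (P₃ - ξ • 1)).submatrix Sum.inr Sum.inr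
        = P₃ - ξ • 1 := by
      ext i j; simp
    rwa [e] at this
  refine ⟨h3, ?_⟩
  have hPd : P₃.PosDef := posdef_of_sub_psd hξ h3
  have hdet : IsUnit P₃.det := (isUnit_iff_isUnit_det _).mp hPd.isUnit
  have hinvT : (P₃⁻¹)ᵀ = P₃⁻¹ := by rw [Matrix.transpose_nonsing_inv, h3symm.eq]
  set Y : Matrix (n ⊕ m) n ℝ := fromRows 1 (-(P₃⁻¹ * P₂ᵀ)) with hY
  have hYT : Yᵀ = fromCols 1 (-(P₂ * P₃⁻¹)) := by
    rw [hY, transpose_fromRows, transpose_one, transpose_neg, transpose_mul, hinvT,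
      transpose_transpose]
  have hMY : fromBlocks P₁ P₂ P₂ᵀ P₃ * Y = fromRows (P₁ - P₂ * P₃⁻¹ * P₂ᵀ) 0 := by
    have ha : P₁ * (1 : Matrix n n ℝ) + P₂ * -(P₃⁻¹ * P₂ᵀ) = P₁ - P₂ * P₃⁻¹ * P₂ᵀ := by
      rw [Matrix.mul_one, Matrix.mul_neg, ← Matrix.mul_assoc, ← sub_eq_add_neg]
    have hz : P₂ᵀ * (1 : Matrix n n ℝ) + P₃ * -(P₃⁻¹ * P₂ᵀ) = 0 := by
      rw [Matrix.mul_one, Matrix.mul_neg, ← Matrix.mul_assoc,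
        Matrix.mul_nonsing_inv _ hdet, Matrix.one_mul, add_neg_cancel]
    rw [hY, fromBlocks_mul_fromRows, ha, hz]
  have hYMY : Yᵀ * fromBlocks P₁ P₂ P₂ᵀ P₃ * Y = P₁ - P₂ * P₃⁻¹ * P₂ᵀ := by
    rw [Matrix.mul_assoc, hMY, hYT, fromCols_mul_fromRows, Matrix.one_mul,
      Matrix.mul_zero, add_zero]
  have hYY : Yᵀ * Y = 1 + (P₂ * P₃⁻¹) * (P₃⁻¹ * P₂ᵀ) := by
    rw [hYT, hY, fromCols_mul_fromRows, Matrix.one_mul, Matrix.neg_mul,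
      Matrix.mul_neg, neg_neg]
  have key : Yᵀ * (fromBlocks P₁ P₂ P₂ᵀ P₃ - ξ • 1) * Y
      = (P₁ - P₂ * P₃⁻¹ * P₂ᵀ - ξ • 1) - ξ • ((P₂ * P₃⁻¹) * (P₃⁻¹ * P₂ᵀ)) := by
    rw [Matrix.mul_sub, Matrix.sub_mul, hYMY, Matrix.mul_smul, Matrix.smul_mul,
      Matrix.mul_one, hYY, smul_add]
    abel
  have hCT : (P₃⁻¹ * P₂ᵀ) = (P₂ * P₃⁻¹)ᵀ := by
    rw [transpose_mul, hinvT]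
  have hpsd2 : (ξ • ((P₂ * P₃⁻¹) * (P₃⁻¹ * P₂ᵀ))).PosSemidef := by
    rw [hCT]
    exact smul_psd hξ.le (psd_mul_transpose _)
  have := (conj_psd H Y).add hpsd2
  rw [key] at this
  have e : (P₁ - P₂ * P₃⁻¹ * P₂ᵀ - ξ • 1) - ξ • ((P₂ * P₃⁻¹) * (P₃⁻¹ * P₂ᵀ))
      + ξ • ((P₂ * P₃⁻¹) * (P₃⁻¹ * P₂ᵀ)) = P₁ - P₂ * P₃⁻¹ * P₂ᵀ - ξ • 1 := by abel
  rwa [e] at this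

end SchurAux4

namespace SchurAux5
open SchurAux SchurAux2 SchurAux3 SchurAux4
variable {n m : Type*} [Fintype n] [Fintype m] [DecidableEq n] [DecidableEq m]

lemma bwd (P₁ : Matrix n n ℝ) (P₂ : Matrix n m ℝ) (P₃ : Matrix m m ℝ) (h3symm : P₃.IsSymm)
    {ξ ξ' c ε lam : ℝ} (hξ : 0 < ξ) (hξ' : 0 < ξ') (hc : 0 < c)
    (hlam0 : 0 < lam) (hlam1 : lam ≤ 1) (hlam2 : lam * ξ * (c ^ 2 / ξ ^ 2) ≤ ξ' / 2)
    (hε0 : 0 < ε) (hε1 : ε ≤ ξ' / 2) (hε2 : ε ≤ lam * ξ / 4)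
    (h3 : (P₃ - ξ • 1).PosSemidef)
    (hS : (P₁ - P₂ * P₃⁻¹ * P₂ᵀ - ξ' • 1).PosSemidef)
    (hnorm : ‖P₂‖ ≤ c) :
    (fromBlocks P₁ P₂ P₂ᵀ P₃ - ε • 1).PosSemidef := by
  have hPd : P₃.PosDef := posdef_of_sub_psd hξ h3
  have hdet : IsUnit P₃.det := (isUnit_iff_isUnit_det _).mp hPd.isUnit
  have hinvT : (P₃⁻¹)ᵀ = P₃⁻¹ := by rw [Matrix.transpose_nonsing_inv, h3symm.eq]
  set K2 : ℝ := c ^ 2 / ξ ^ 2 with hK2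
  set Q : Matrix m n ℝ := P₃⁻¹ * P₂ᵀ with hQdef
  have hQT : Qᵀ = P₂ * P₃⁻¹ := by rw [hQdef, transpose_mul, hinvT, transpose_transpose]
  -- bound on QᵀQ
  have hRR : (ξ⁻¹ ^ 2 • 1 - P₃⁻¹ * P₃⁻¹).PosSemidef := inv_sq_bound hξ h3
  have hP2 : ((c ^ 2) • 1 - P₂ * P₂ᵀ).PosSemidef := by
    have hn : ‖P₂ᵀ‖ ≤ c := by
      rw [← conjTranspose_eq_transpose_of_trivial, l2_opNorm_conjTranspose]; exact hnorm
    have := norm_to_psd hc.le hn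
    rwa [transpose_transpose] at this
  have hQQ : (K2 • 1 - Qᵀ * Q).PosSemidef := by
    have h1 := conj_psd' hRR P₂
    have e1 : P₂ * (ξ⁻¹ ^ 2 • (1 : Matrix m m ℝ) - P₃⁻¹ * P₃⁻¹) * P₂ᵀ
        = ξ⁻¹ ^ 2 • (P₂ * P₂ᵀ) - Qᵀ * Q := by
      rw [hQT, hQdef, Matrix.mul_sub, Matrix.sub_mul, Matrix.mul_smul, Matrix.smul_mul,
        Matrix.mul_one]
      congr 1
      simp only [Matrix.mul_assoc]
    rw [e1] at h1
    have h2 := smul_psd (a := ξ⁻¹ ^ 2) (by positivity) hP2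
    have e2 : ξ⁻¹ ^ 2 • ((c ^ 2) • (1 : Matrix n n ℝ) - P₂ * P₂ᵀ)
        = K2 • 1 - ξ⁻¹ ^ 2 • (P₂ * P₂ᵀ) := by
      rw [smul_sub, smul_smul, hK2]
      congr 2
      field_simp
    rw [e2] at h2
    have h12 := h2.add h1
    have e3 : (K2 • (1 : Matrix n n ℝ) - ξ⁻¹ ^ 2 • (P₂ * P₂ᵀ))
        + (ξ⁻¹ ^ 2 • (P₂ * P₂ᵀ) - Qᵀ * Q) = K2 • 1 - Qᵀ * Q := by abel
    rwa [e3] at h12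
  -- the L D Lᵀ decomposition
  set S : Matrix n n ℝ := P₁ - P₂ * P₃⁻¹ * P₂ᵀ with hSdef
  set L : Matrix (n ⊕ m) (n ⊕ m) ℝ := fromBlocks 1 0 Q 1 with hLdef
  have hLT : Lᵀ = fromBlocks 1 Qᵀ 0 1 := by
    rw [hLdef, fromBlocks_transpose, transpose_one, transpose_zero, transpose_one]
  have hb : Qᵀ * P₃ = P₂ := by
    rw [hQT, Matrix.mul_assoc, Matrix.nonsing_inv_mul _ hdet, Matrix.mul_one]
  have hc' : P₃ * Q = P₂ᵀ := by
    rw [hQdef, ← Matrix.mul_assoc, Matrix.mul_nonsing_inv _ hdet, Matrix.one_mul]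
  have hP1 : S + P₂ * Q = P₁ := by
    rw [hSdef, hQdef, ← Matrix.mul_assoc]
    abel
  have hdecomp : fromBlocks P₁ P₂ P₂ᵀ P₃ = Lᵀ * fromBlocks S 0 0 P₃ * L := by
    rw [hLT, hLdef, fromBlocks_multiply, fromBlocks_multiply]
    simp only [Matrix.one_mul, Matrix.mul_one, Matrix.zero_mul, Matrix.mul_zero, add_zero,
      zero_add]
    rw [hb, hc', hP1]
  have hsplit : fromBlocks S 0 0 P₃
      = fromBlocks (S - ξ' • 1) 0 0 (P₃ - ξ • 1) + fromBlocks (ξ' • 1) 0 0 (ξ • 1) := by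
    rw [fromBlocks_add]
    have e1 : S - ξ' • 1 + ξ' • 1 = S := by abel
    have e2 : P₃ - ξ • 1 + ξ • 1 = P₃ := by abel
    rw [e1, e2]
    simp
  have hpiece1 : (Lᵀ * fromBlocks (S - ξ' • 1) 0 0 (P₃ - ξ • 1) * L).PosSemidef :=
    conj_psd (blockDiag_psd hS h3) L
  have hLdL : Lᵀ * fromBlocks (ξ' • 1) 0 0 (ξ • 1) * L
      = fromBlocks (ξ' • 1 + ξ • (Qᵀ * Q)) (ξ • Qᵀ) (ξ • Q) (ξ • 1) := by
    rw [hLT, hLdef, fromBlocks_multiply, fromBlocks_multiply]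
    simp only [Matrix.one_mul, Matrix.mul_one, Matrix.zero_mul, Matrix.mul_zero, add_zero,
      zero_add, Matrix.smul_mul, Matrix.mul_smul, smul_zero]
  have hNN : fromBlocks (Qᵀ * Q) Qᵀ Q (1 : Matrix m m ℝ) = (fromCols Q 1)ᵀ * fromCols Q 1 := by
    rw [transpose_fromCols, transpose_one, fromRows_mul_fromCols, Matrix.one_mul,
      Matrix.mul_one, Matrix.one_mul]
  have hNNpsd : (fromBlocks (Qᵀ * Q) Qᵀ Q (1 : Matrix m m ℝ)).PosSemidef := by
    have := posSemidef_conjTranspose_mul_self (fromCols Q (1 : Matrix m m ℝ))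
    rw [conjTranspose_eq_transpose_of_trivial] at this
    rw [hNN]; exact this
  have hhalf : ((2⁻¹ : ℝ) • (1 : Matrix m m ℝ)).PosDef := posdef_smul_one (by norm_num)
  haveI : Invertible ((2⁻¹ : ℝ) • (1 : Matrix m m ℝ)) := hhalf.isUnit.invertible
  have hDinv : ((2⁻¹ : ℝ) • (1 : Matrix m m ℝ))⁻¹ = (2 : ℝ) • 1 := by
    apply Matrix.inv_eq_right_inv
    rw [smul_mul_smul_comm]
    norm_num
  have herm : (Qᵀ)ᴴ = Q := by
    rw [conjTranspose_eq_transpose_of_trivial, transpose_transpose]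
  have hblock2 : (fromBlocks (Qᵀ * Q + K2 • 1) Qᵀ Q ((2⁻¹ : ℝ) • 1)).PosSemidef := by
    have h' : (fromBlocks (Qᵀ * Q + K2 • 1) Qᵀ (Qᵀ)ᴴ ((2⁻¹ : ℝ) • 1)).PosSemidef := by
      rw [PosDef.fromBlocks₂₂ _ _ hhalf, hDinv, herm]
      have e : Qᵀ * Q + K2 • 1 - Qᵀ * ((2 : ℝ) • (1 : Matrix m m ℝ)) * Q = K2 • 1 - Qᵀ * Q := by
        rw [Matrix.mul_smul, Matrix.mul_one, Matrix.smul_mul]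
        module
      rw [e]; exact hQQ
    rwa [herm] at h'
  have hlamxi : 0 < lam * ξ := mul_pos hlam0 hξ
  have hcoef1 : 0 ≤ ξ' - ε - lam * ξ * K2 := by linarith
  have hcoef2 : 0 ≤ lam * ξ * 2⁻¹ - ε := by linarith
  have hpiece3 : (fromBlocks ((ξ' - ε - lam * ξ * K2) • (1 : Matrix n n ℝ)) 0 0
      ((lam * ξ * 2⁻¹ - ε) • (1 : Matrix m m ℝ))).PosSemidef :=
    blockDiag_psd (psd_smul_one hcoef1) (psd_smul_one hcoef2)
  have hG : fromBlocks (ξ' • 1 + ξ • (Qᵀ * Q)) (ξ • Qᵀ) (ξ • Q) (ξ • (1 : Matrix m m ℝ))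
        - ε • (1 : Matrix (n ⊕ m) (n ⊕ m) ℝ)
      = ((1 - lam) * ξ) • fromBlocks (Qᵀ * Q) Qᵀ Q 1
        + (lam * ξ) • fromBlocks (Qᵀ * Q + K2 • 1) Qᵀ Q ((2⁻¹ : ℝ) • 1)
        + fromBlocks ((ξ' - ε - lam * ξ * K2) • 1) 0 0 ((lam * ξ * 2⁻¹ - ε) • 1) := by
    rw [← fromBlocks_one (l := n) (m := m), fromBlocks_smul, fromBlocks_smul, fromBlocks_smul,
      fromBlocks_add, fromBlocks_add, sub_eq_add_neg, fromBlocks_neg,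
      fromBlocks_add, fromBlocks_inj]
    refine ⟨by module, by module, by module, by module⟩
  have hfinal : fromBlocks P₁ P₂ P₂ᵀ P₃ - ε • 1
      = Lᵀ * fromBlocks (S - ξ' • 1) 0 0 (P₃ - ξ • 1) * L
        + (((1 - lam) * ξ) • fromBlocks (Qᵀ * Q) Qᵀ Q 1
          + (lam * ξ) • fromBlocks (Qᵀ * Q + K2 • 1) Qᵀ Q ((2⁻¹ : ℝ) • 1)
          + fromBlocks ((ξ' - ε - lam * ξ * K2) • 1) 0 0 ((lam * ξ * 2⁻¹ - ε) • 1)) := by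
    rw [← hG, ← hLdL, hdecomp, hsplit, Matrix.mul_add, Matrix.add_mul]
    abel
  rw [hfinal]
  exact hpiece1.add (((smul_psd (by nlinarith) hNNpsd).add
    (smul_psd hlamxi.le hblock2)).add hpiece3)

end SchurAux5

namespace SchurMain
open SchurAux SchurAux2 SchurAux3 SchurAux4 SchurAux5

variable {Θ : Type*} [MeasurableSpace Θ]

lemma key (μ : MeasureTheory.Measure Θ) {n m : Type*} [Fintype n] [Fintype m] [DecidableEq n]
    [DecidableEq m]
    (P₁ : Θ → Matrix n n ℝ) (P₂ : Θ → Matrix n m ℝ) (P₃ : Θ → Matrix m m ℝ)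
    (h3symm : ∀ ℓ, (P₃ ℓ).IsSymm) (h2bdd : EssBdd μ P₂) :
    UnifPos μ (fun ℓ => Matrix.fromBlocks (P₁ ℓ) (P₂ ℓ) (P₂ ℓ)ᵀ (P₃ ℓ)) ↔
      (UnifPos μ P₃ ∧ UnifPos μ (fun ℓ => P₁ ℓ - P₂ ℓ * (P₃ ℓ)⁻¹ * (P₂ ℓ)ᵀ)) := by
  constructor
  · rintro ⟨ξ, hξ, hae⟩
    exact ⟨⟨ξ, hξ, hae.mono fun ℓ h => (fwd _ _ _ (h3symm ℓ) hξ h).1⟩,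
           ⟨ξ, hξ, hae.mono fun ℓ h => (fwd _ _ _ (h3symm ℓ) hξ h).2⟩⟩
  · rintro ⟨⟨ξ, hξ, h3ae⟩, ⟨ξ', hξ', hSae⟩⟩
    obtain ⟨c, hc, hcae⟩ := h2bdd
    set K2 : ℝ := c ^ 2 / ξ ^ 2 with hK2
    have hK2pos : 0 < K2 := by rw [hK2]; positivity
    set lam : ℝ := min 1 (ξ' / (2 * ξ * K2)) with hlam
    have hlam0 : 0 < lam :=
      lt_min one_pos (div_pos hξ' (by nlinarith))
    have hlam1 : lam ≤ 1 := min_le_left _ _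
    have hlam2 : lam * ξ * K2 ≤ ξ' / 2 := by
      have h1 : lam ≤ ξ' / (2 * ξ * K2) := min_le_right _ _
      have h2 : 0 < ξ * K2 := mul_pos hξ hK2pos
      calc lam * ξ * K2 = lam * (ξ * K2) := by ring
        _ ≤ (ξ' / (2 * ξ * K2)) * (ξ * K2) := mul_le_mul_of_nonneg_right h1 h2.le
        _ = ξ' / 2 := by
            field_simp
    set ε : ℝ := min (ξ' / 2) (lam * ξ / 4) with hε
    have hε0 : 0 < ε := lt_min (by positivity) (by positivity)
    refine ⟨ε, hε0, ?_⟩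
    filter_upwards [h3ae, hSae, hcae] with ℓ h3 hS hc2
    exact bwd _ _ _ (h3symm ℓ) hξ hξ' hc hlam0 hlam1 hlam2 hε0 (min_le_left _ _)
      (min_le_right _ _) h3 hS hc2

lemma psd_swap {α β : Type*} [Fintype α] [Fintype β] [DecidableEq α] [DecidableEq β]
    (M : Matrix (α ⊕ β) (α ⊕ β) ℝ) (ξ : ℝ) (h : (M - ξ • 1).PosSemidef) :
    ((M.submatrix (Sum.swap : β ⊕ α → α ⊕ β) Sum.swap) - ξ • 1).PosSemidef := by
  have h2 := h.submatrix (Sum.swap : β ⊕ α → α ⊕ β)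
  have e : (M - ξ • 1).submatrix (Sum.swap : β ⊕ α → α ⊕ β) Sum.swap
      = M.submatrix Sum.swap Sum.swap - ξ • 1 := by
    ext i j
    simp only [Matrix.submatrix_apply, Matrix.sub_apply, Matrix.smul_apply, smul_eq_mul,
      Matrix.one_apply, Sum.swap_leftInverse.injective.eq_iff]
  rwa [e] at h2

lemma unifPos_swap (μ : MeasureTheory.Measure Θ) {n m : Type*} [Fintype n] [Fintype m]
    [DecidableEq n] [DecidableEq m] (P : Θ → Matrix (n ⊕ m) (n ⊕ m) ℝ) :
    UnifPos μ P ↔ UnifPos μ (fun ℓ => (P ℓ).submatrix Sum.swap Sum.swap) := by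
  constructor
  · rintro ⟨ξ, hξ, hae⟩
    exact ⟨ξ, hξ, hae.mono fun ℓ h => psd_swap (P ℓ) ξ h⟩
  · rintro ⟨ξ, hξ, hae⟩
    refine ⟨ξ, hξ, hae.mono fun ℓ h => ?_⟩
    have h2 := psd_swap ((P ℓ).submatrix Sum.swap Sum.swap) ξ h
    have e : ((P ℓ).submatrix Sum.swap Sum.swap).submatrix
        (Sum.swap : n ⊕ m → m ⊕ n) Sum.swap = P ℓ := by
      have hcomp : ((Sum.swap : m ⊕ n → n ⊕ m) ∘ (Sum.swap : n ⊕ m → m ⊕ n)) = id := by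
        funext x; simp
      rw [Matrix.submatrix_submatrix, hcomp, Matrix.submatrix_id_id]
    rwa [e] at h2

end SchurMain

/-- Generalized Schur complements (Proposition 1): for measurable, essentially bounded families
`P₁, P₂, P₃` with `P₁, P₃` symmetric, uniform positivity of the block family
`ℓ ↦ [[P₁ ℓ, P₂ ℓ], [(P₂ ℓ)ᵀ, P₃ ℓ]]` is equivalent to (ii), and equivalent to (iii). -/
theorem generalized_schur_complements
    {Θ : Type*} [MeasurableSpace Θ] (μ : Measure Θ) [SigmaFinite μ]
    (n m : ℕ) (hn : 0 < n) (hm : 0 < m)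
    (P₁ : Θ → Matrix (Fin n) (Fin n) ℝ) (P₂ : Θ → Matrix (Fin n) (Fin m) ℝ)
    (P₃ : Θ → Matrix (Fin m) (Fin m) ℝ)
    (hP₁symm : ∀ ℓ, (P₁ ℓ).IsSymm) (hP₃symm : ∀ ℓ, (P₃ ℓ).IsSymm)
    (hP₁meas : ∀ i j, Measurable fun ℓ => P₁ ℓ i j)
    (hP₂meas : ∀ i j, Measurable fun ℓ => P₂ ℓ i j)
    (hP₃meas : ∀ i j, Measurable fun ℓ => P₃ ℓ i j)
    (hP₁bdd : EssBdd μ P₁) (hP₂bdd : EssBdd μ P₂) (hP₃bdd : EssBdd μ P₃) :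
    (UnifPos μ (fun ℓ => Matrix.fromBlocks (P₁ ℓ) (P₂ ℓ) (P₂ ℓ)ᵀ (P₃ ℓ)) ↔
      (UnifPos μ P₃ ∧ UnifPos μ (fun ℓ => P₁ ℓ - P₂ ℓ * (P₃ ℓ)⁻¹ * (P₂ ℓ)ᵀ))) ∧
    (UnifPos μ (fun ℓ => Matrix.fromBlocks (P₁ ℓ) (P₂ ℓ) (P₂ ℓ)ᵀ (P₃ ℓ)) ↔
      (UnifPos μ P₁ ∧ UnifPos μ (fun ℓ => P₃ ℓ - (P₂ ℓ)ᵀ * (P₁ ℓ)⁻¹ * P₂ ℓ))) := by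
  constructor
  · exact SchurMain.key μ P₁ P₂ P₃ hP₃symm hP₂bdd
  · rw [SchurMain.unifPos_swap μ (fun ℓ => Matrix.fromBlocks (P₁ ℓ) (P₂ ℓ) (P₂ ℓ)ᵀ (P₃ ℓ))]
    have e : (fun ℓ => (Matrix.fromBlocks (P₁ ℓ) (P₂ ℓ) (P₂ ℓ)ᵀ (P₃ ℓ)).submatrix
          (Sum.swap : Fin m ⊕ Fin n → Fin n ⊕ Fin m) Sum.swap)
        = fun ℓ => Matrix.fromBlocks (P₃ ℓ) ((P₂ ℓ)ᵀ) ((P₂ ℓ)ᵀ)ᵀ (P₁ ℓ) := by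
      funext ℓ
      rw [Matrix.fromBlocks_submatrix_sum_swap_sum_swap, Matrix.transpose_transpose]
    rw [e]
    have hbdd : EssBdd μ (fun ℓ => (P₂ ℓ)ᵀ) := by
      obtain ⟨c, hc, hae⟩ := hP₂bdd
      refine ⟨c, hc, hae.mono fun ℓ h => ?_⟩
      show ‖(P₂ ℓ)ᵀ‖ ≤ c
      rw [← Matrix.conjTranspose_eq_transpose_of_trivial, Matrix.l2_opNorm_conjTranspose]
      exact h
    rw [SchurMain.key μ P₃ (fun ℓ => (P₂ ℓ)ᵀ) P₁ hP₁symm hbdd]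
    have e3 : (fun ℓ => P₃ ℓ - (P₂ ℓ)ᵀ * (P₁ ℓ)⁻¹ * ((P₂ ℓ)ᵀ)ᵀ)
        = fun ℓ => P₃ ℓ - (P₂ ℓ)ᵀ * (P₁ ℓ)⁻¹ * P₂ ℓ := by
      funext ℓ; rw [Matrix.transpose_transpose]
    rw [e3]

end
end

section
/- Let γ ∈ ℝ, A ∈ ℝ^{n×n}, B ∈ ℝ^{n×r}, C ∈ ℝ^{r×n}, and let P, P_c, E, E_c ∈ ℝ^{n×n} be symmetric matrices such that γ·I − BᵀEB and γ·I − BᵀE_cB are invertible. Define F = −(γI − BᵀEB)⁻¹ BᵀEA, F_c = −(γI − BᵀE_cB)⁻¹ BᵀE_cA, W = P − AᵀEA − CᵀC − AᵀEB(γI − BᵀEB)⁻¹BᵀEA, and W_c = P_c − AᵀE_cA − CᵀC − AᵀE_cB(γI − BᵀE_cB)⁻¹BᵀE_cA. Then W_c − W = −[(P − P_c) − (A − BF)ᵀ(E − E_c)(A − BF)] − (F_c − F)ᵀ(γI − BᵀE_cB)(F_c − F). -/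
/-!
Write `S = γI - BᵀEB` and `Q_E(K) = (A - BK)ᵀE(A - BK) - γKᵀK`. The gain `F` of `E` is the
stationary point of `Q_E`, i.e. `SF = -BᵀEA`, so completing the square gives
`Q_E(K) = Q_E(F) - (F - K)ᵀS(F - K)` for every `K`, and `W = P - CᵀC - Q_E(F)`.
Comparing `Q_{E_c}` at `F_c` and at `F` produces the last term of the identity; since `Q_E(K)` is
affine in `E`, comparing `Q_E(F)` with `Q_{E_c}(F)` produces `(A - BF)ᵀ(E - E_c)(A - BF)`.
-/

open Matrix

noncomputable section

/-- The feedback gain `F = -(γI - BᵀEB)⁻¹ Bᵀ E A`. -/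
def Fgain {n r : ℕ} (γ : ℝ) (A : Matrix (Fin n) (Fin n) ℝ) (B : Matrix (Fin n) (Fin r) ℝ)
    (E : Matrix (Fin n) (Fin n) ℝ) : Matrix (Fin r) (Fin n) ℝ :=
  -((γ • (1 : Matrix (Fin r) (Fin r) ℝ) - Bᵀ * E * B)⁻¹ * (Bᵀ * E * A))

/-- The Riccati-type operator value
`W = P - AᵀEA - CᵀC - AᵀEB (γI - BᵀEB)⁻¹ BᵀEA`. -/
def Wop {n r : ℕ} (γ : ℝ) (A P E : Matrix (Fin n) (Fin n) ℝ) (B : Matrix (Fin n) (Fin r) ℝ)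
    (C : Matrix (Fin r) (Fin n) ℝ) : Matrix (Fin n) (Fin n) ℝ :=
  P - Aᵀ * E * A - Cᵀ * C -
    Aᵀ * E * B * (γ • (1 : Matrix (Fin r) (Fin r) ℝ) - Bᵀ * E * B)⁻¹ * (Bᵀ * E * A)

section RiccatiQuad

variable {R m n : Type*} [CommRing R] [Fintype m] [Fintype n]

def riccatiQuad (γ : R) (A E : Matrix m m R) (B : Matrix m n R) (K : Matrix n m R) :
    Matrix m m R :=
  (A - B * K)ᵀ * E * (A - B * K) - γ • (Kᵀ * K)

theorem riccatiQuad_sub_riccatiQuad (γ : R) (A E E' : Matrix m m R) (B : Matrix m n R)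
    (K : Matrix n m R) :
    riccatiQuad γ A E B K - riccatiQuad γ A E' B K = (A - B * K)ᵀ * (E - E') * (A - B * K) := by
  simp only [riccatiQuad, Matrix.mul_sub, Matrix.sub_mul]
  abel

variable [DecidableEq n]

theorem riccatiQuad_eq (γ : R) (A E : Matrix m m R) (B : Matrix m n R) (K : Matrix n m R) :
    riccatiQuad γ A E B K = Aᵀ * E * A - Aᵀ * E * B * K - Kᵀ * (Bᵀ * E * A) -
      Kᵀ * (γ • 1 - Bᵀ * E * B) * K := by
  simp only [riccatiQuad, transpose_sub, transpose_mul, Matrix.mul_sub, Matrix.sub_mul,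
    Matrix.mul_smul, Matrix.smul_mul, Matrix.mul_one, Matrix.mul_assoc]
  abel

theorem riccatiQuad_stationary_eq_add {γ : R} {A E : Matrix m m R} {B : Matrix m n R}
    {F : Matrix n m R} (hE : E.IsSymm) (hF : (γ • 1 - Bᵀ * E * B) * F = -(Bᵀ * E * A))
    (K : Matrix n m R) :
    riccatiQuad γ A E B F =
      riccatiQuad γ A E B K + (F - K)ᵀ * (γ • 1 - Bᵀ * E * B) * (F - K) := by
  have hS : (γ • 1 - Bᵀ * E * B)ᵀ = γ • 1 - Bᵀ * E * B := by
    simp only [transpose_sub, transpose_smul, transpose_one, transpose_mul, hE.eq,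
      transpose_transpose, Matrix.mul_assoc]
  have hBEA : Bᵀ * E * A = -((γ • 1 - Bᵀ * E * B) * F) := by rw [hF, neg_neg]
  have hAEB : Aᵀ * E * B = -(Fᵀ * (γ • 1 - Bᵀ * E * B)) := by
    rw [← hS, ← transpose_mul, hF, transpose_neg]
    simp only [transpose_mul, hE.eq, transpose_transpose, Matrix.mul_assoc, neg_neg]
  rw [riccatiQuad_eq, riccatiQuad_eq, hAEB, hBEA]
  simp only [transpose_sub, Matrix.mul_sub, Matrix.sub_mul, Matrix.neg_mul, Matrix.mul_neg,
    Matrix.mul_assoc]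
  abel

end RiccatiQuad

theorem mul_Fgain {n r : ℕ} {γ : ℝ} {E : Matrix (Fin n) (Fin n) ℝ}
    {B : Matrix (Fin n) (Fin r) ℝ}
    (hinv : IsUnit (γ • (1 : Matrix (Fin r) (Fin r) ℝ) - Bᵀ * E * B))
    (A : Matrix (Fin n) (Fin n) ℝ) :
    (γ • 1 - Bᵀ * E * B) * Fgain γ A B E = -(Bᵀ * E * A) := by
  rw [Fgain, Matrix.mul_neg,
    Matrix.mul_nonsing_inv_cancel_left _ _ ((isUnit_iff_isUnit_det _).mp hinv)]

theorem Wop_eq_sub_riccatiQuad {n r : ℕ} {γ : ℝ} {E : Matrix (Fin n) (Fin n) ℝ}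
    {B : Matrix (Fin n) (Fin r) ℝ}
    (hinv : IsUnit (γ • (1 : Matrix (Fin r) (Fin r) ℝ) - Bᵀ * E * B))
    (A P : Matrix (Fin n) (Fin n) ℝ) (C : Matrix (Fin r) (Fin n) ℝ) :
    Wop γ A P E B C = P - Cᵀ * C - riccatiQuad γ A E B (Fgain γ A B E) := by
  have hF := mul_Fgain hinv A
  have hquad : riccatiQuad γ A E B (Fgain γ A B E) = Aᵀ * E * A - Aᵀ * E * B * Fgain γ A B E := by
    rw [riccatiQuad_eq, Matrix.mul_assoc (Fgain γ A B E)ᵀ, hF, Matrix.mul_neg, sub_neg_eq_add,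
      sub_add_cancel]
  rw [Wop, hquad, Fgain, Matrix.mul_neg, Matrix.mul_assoc (Aᵀ * E * B)]
  abel

theorem riccati_difference_identity_general (n r : ℕ) (γ : ℝ)
    (A P Pc E Ec : Matrix (Fin n) (Fin n) ℝ)
    (B : Matrix (Fin n) (Fin r) ℝ) (C : Matrix (Fin r) (Fin n) ℝ)
    (hEc : Ec.IsSymm)
    (hinv : IsUnit (γ • (1 : Matrix (Fin r) (Fin r) ℝ) - Bᵀ * E * B))
    (hinvc : IsUnit (γ • (1 : Matrix (Fin r) (Fin r) ℝ) - Bᵀ * Ec * B)) :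
    Wop γ A Pc Ec B C - Wop γ A P E B C =
      -((P - Pc) - (A - B * Fgain γ A B E)ᵀ * (E - Ec) * (A - B * Fgain γ A B E)) -
        (Fgain γ A B Ec - Fgain γ A B E)ᵀ *
          (γ • (1 : Matrix (Fin r) (Fin r) ℝ) - Bᵀ * Ec * B) *
          (Fgain γ A B Ec - Fgain γ A B E) := by
  rw [Wop_eq_sub_riccatiQuad hinv, Wop_eq_sub_riccatiQuad hinvc,
    riccatiQuad_stationary_eq_add hEc (mul_Fgain hinvc A) (Fgain γ A B E),
    ← riccatiQuad_sub_riccatiQuad]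
  abel

/-- The Riccati-difference identity (equation (34) of the paper):
`W_c − W = −[(P − P_c) − (A − BF)ᵀ(E − E_c)(A − BF)] − (F_c − F)ᵀ(γI − BᵀE_cB)(F_c − F)`. -/
theorem riccati_difference_identity (n r : ℕ) (γ : ℝ)
    (A P Pc E Ec : Matrix (Fin n) (Fin n) ℝ)
    (B : Matrix (Fin n) (Fin r) ℝ) (C : Matrix (Fin r) (Fin n) ℝ)
    (hP : P.IsSymm) (hPc : Pc.IsSymm) (hE : E.IsSymm) (hEc : Ec.IsSymm)
    (hinv : IsUnit (γ • (1 : Matrix (Fin r) (Fin r) ℝ) - Bᵀ * E * B))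
    (hinvc : IsUnit (γ • (1 : Matrix (Fin r) (Fin r) ℝ) - Bᵀ * Ec * B)) :
    Wop γ A Pc Ec B C - Wop γ A P E B C =
      -((P - Pc) - (A - B * Fgain γ A B E)ᵀ * (E - Ec) * (A - B * Fgain γ A B E)) -
        (Fgain γ A B Ec - Fgain γ A B E)ᵀ *
          (γ • (1 : Matrix (Fin r) (Fin r) ℝ) - Bᵀ * Ec * B) *
          (Fgain γ A B Ec - Fgain γ A B E) :=
  riccati_difference_identity_general n r γ A P Pc E Ec B C hEc hinv hinvc

end
end

section
/- Let N, n, r be positive integers, γ > 0, and let p ∈ ℝ^{N×N} satisfy pᵢⱼ ≥ 0 and Σ_{j=1}^{N} pᵢⱼ = 1 for every i. Given Aᵢ ∈ ℝ^{n×n}, Bᵢ ∈ ℝ^{n×r}, Cᵢ ∈ ℝ^{r×n}, set Qᵢ = [√pᵢ₁·Iₙ, √pᵢ₂·Iₙ, …, √pᵢN·Iₙ] ∈ ℝ^{n×nN}. Suppose there exist nonsingular Xᵢ ∈ ℝ^{n×n}, symmetric positive definite Pᵢ ∈ ℝ^{n×n}, and scalars σ_{A,i}, σ_{B,i}, σ_{C,i},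 σ_{Q,i}, αᵢ, βᵢ, ρᵢ > 0 such that Π¹ᵢ (built from these data, with Υ = blockdiag(P₁,…,P_N)) is positive definite for every i ∈ {1,…,N}. Then, writing P_sum(i) = Σ_{j=1}^{N} pᵢⱼ·Pⱼ, for every i the symmetric block matrix [[P_sum(i), 0, P_sum(i)·Aᵢ, P_sum(i)·Bᵢ], [0, I, Cᵢ, 0], [Aᵢᵀ·P_sum(i), Cᵢᵀ, Pᵢ, 0], [Bᵢᵀ·P_sum(i), 0, 0, γ·I]] is positive definite. -/
open MeasureTheory Matrix
open scoped Matrix.Norms.L2Operator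

noncomputable section

/-- Index type with 14 components, of sizes `(n, r, n, r, nN, r, n, n, n, r, r, nN, n, r)`. -/
abbrev T14 (n r N : ℕ) : Type :=
  Fin n ⊕ (Fin r ⊕ (Fin n ⊕ (Fin r ⊕ ((Fin n × Fin N) ⊕ (Fin r ⊕ (Fin n ⊕ (Fin n ⊕
    (Fin n ⊕ (Fin r ⊕ (Fin r ⊕ ((Fin n × Fin N) ⊕ (Fin n ⊕ Fin r))))))))))))

instance T14.decEq (n r N : ℕ) : DecidableEq (T14 n r N) := inferInstance
instance T14.fintype (n r N : ℕ) : Fintype (T14 n r N) := inferInstance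

section Embeddings
variable {n r N : ℕ}
def j1 (v : Fin n) : T14 n r N := Sum.inl v
def j2 (v : Fin r) : T14 n r N := Sum.inr (Sum.inl v)
def j3 (v : Fin n) : T14 n r N := Sum.inr (Sum.inr (Sum.inl v))
def j4 (v : Fin r) : T14 n r N := Sum.inr (Sum.inr (Sum.inr (Sum.inl v)))
def j5 (v : Fin n × Fin N) : T14 n r N := Sum.inr (Sum.inr (Sum.inr (Sum.inr (Sum.inl v))))
def j6 (v : Fin r) : T14 n r N :=
  Sum.inr (Sum.inr (Sum.inr (Sum.inr (Sum.inr (Sum.inl v)))))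
def j7 (v : Fin n) : T14 n r N :=
  Sum.inr (Sum.inr (Sum.inr (Sum.inr (Sum.inr (Sum.inr (Sum.inl v))))))
def j8 (v : Fin n) : T14 n r N :=
  Sum.inr (Sum.inr (Sum.inr (Sum.inr (Sum.inr (Sum.inr (Sum.inr (Sum.inl v)))))))
def j9 (v : Fin n) : T14 n r N :=
  Sum.inr (Sum.inr (Sum.inr (Sum.inr (Sum.inr (Sum.inr (Sum.inr (Sum.inr (Sum.inl v))))))))
def j10 (v : Fin r) : T14 n r N :=
  Sum.inr (Sum.inr (Sum.inr (Sum.inr (Sum.inr (Sum.inr (Sum.inr (Sum.inr (Sum.inr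
    (Sum.inl v)))))))))
def j11 (v : Fin r) : T14 n r N :=
  Sum.inr (Sum.inr (Sum.inr (Sum.inr (Sum.inr (Sum.inr (Sum.inr (Sum.inr (Sum.inr
    (Sum.inr (Sum.inl v))))))))))
def j12 (v : Fin n × Fin N) : T14 n r N :=
  Sum.inr (Sum.inr (Sum.inr (Sum.inr (Sum.inr (Sum.inr (Sum.inr (Sum.inr (Sum.inr
    (Sum.inr (Sum.inr (Sum.inl v)))))))))))
def j13 (v : Fin n) : T14 n r N :=
  Sum.inr (Sum.inr (Sum.inr (Sum.inr (Sum.inr (Sum.inr (Sum.inr (Sum.inr (Sum.inr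
    (Sum.inr (Sum.inr (Sum.inr (Sum.inl v))))))))))))
def j14 (v : Fin r) : T14 n r N :=
  Sum.inr (Sum.inr (Sum.inr (Sum.inr (Sum.inr (Sum.inr (Sum.inr (Sum.inr (Sum.inr
    (Sum.inr (Sum.inr (Sum.inr (Sum.inr v))))))))))))
end Embeddings

/-- Place the block `M` in a big square matrix indexed by `T`, with row indices embedded by `f`
and column indices embedded by `g` (all other entries zero). -/
def place {α β T : Type*} [Fintype α] [Fintype β] [DecidableEq T]
    (f : α → T) (g : β → T) (M : Matrix α β ℝ) : Matrix T T ℝ :=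
  Matrix.of fun x y => ∑ i : α, ∑ j : β, if x = f i ∧ y = g j then M i j else 0

/-- The 14×14-block symmetric matrix `Π¹ᵢ` of the gridding LMI problem. -/
def Pi1 (n r N : ℕ) (γ σA σB σC σQ α β ρ : ℝ)
    (X A Pi : Matrix (Fin n) (Fin n) ℝ) (B : Matrix (Fin n) (Fin r) ℝ)
    (C : Matrix (Fin r) (Fin n) ℝ) (Q : Matrix (Fin n) (Fin n × Fin N) ℝ)
    (Υ : Matrix (Fin n × Fin N) (Fin n × Fin N) ℝ) :
    Matrix (T14 n r N) (T14 n r N) ℝ :=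
  place j1 j1 (X + Xᵀ) + place j2 j2 (1 : Matrix (Fin r) (Fin r) ℝ) + place j3 j3 Pi +
    place j4 j4 (γ • (1 : Matrix (Fin r) (Fin r) ℝ)) + place j5 j5 Υ +
    place j6 j6 ((2 * α) • (1 : Matrix (Fin r) (Fin r) ℝ)) +
    place j7 j7 ((2 * α) • (1 : Matrix (Fin n) (Fin n) ℝ)) +
    place j8 j8 (α • (1 : Matrix (Fin n) (Fin n) ℝ)) +
    place j9 j9 (β • (1 : Matrix (Fin n) (Fin n) ℝ)) +
    place j10 j10 (β • (1 : Matrix (Fin r) (Fin r) ℝ)) +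
    place j11 j11 (β • (1 : Matrix (Fin r) (Fin r) ℝ)) +
    place j12 j12 (ρ • (1 : Matrix (Fin n × Fin N) (Fin n × Fin N) ℝ)) +
    place j13 j13 (ρ • (1 : Matrix (Fin n) (Fin n) ℝ)) +
    place j14 j14 (ρ • (1 : Matrix (Fin r) (Fin r) ℝ)) +
    (place j1 j3 (X * A) + place j3 j1 (X * A)ᵀ) +
    (place j1 j4 (X * B) + place j4 j1 (X * B)ᵀ) +
    (place j1 j5 (Q * Υ) + place j5 j1 (Q * Υ)ᵀ) +
    (place j1 j7 ((2 * σA) • X) + place j7 j1 ((2 * σA) • X)ᵀ) +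
    (place j1 j9 (σB • X) + place j9 j1 (σB • X)ᵀ) +
    (place j1 j13 (ρ • (1 : Matrix (Fin n) (Fin n) ℝ)) +
      place j13 j1 (ρ • (1 : Matrix (Fin n) (Fin n) ℝ))ᵀ) +
    (place j2 j3 C + place j3 j2 Cᵀ) +
    (place j2 j6 ((2 * σC) • (1 : Matrix (Fin r) (Fin r) ℝ)) +
      place j6 j2 ((2 * σC) • (1 : Matrix (Fin r) (Fin r) ℝ))ᵀ) +
    (place j2 j14 (ρ • (1 : Matrix (Fin r) (Fin r) ℝ)) +
      place j14 j2 (ρ • (1 : Matrix (Fin r) (Fin r) ℝ))ᵀ) +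
    (place j3 j8 (α • (1 : Matrix (Fin n) (Fin n) ℝ)) +
      place j8 j3 (α • (1 : Matrix (Fin n) (Fin n) ℝ))ᵀ) +
    (place j4 j11 (β • (1 : Matrix (Fin r) (Fin r) ℝ)) +
      place j11 j4 (β • (1 : Matrix (Fin r) (Fin r) ℝ))ᵀ) +
    (place j5 j12 (σQ • Υ) + place j12 j5 (σQ • Υ)ᵀ)

/-- The `i`-th cell of the partition `a = h 0 < h 1 < ⋯ < h N = b`:
`Λᵢ = [hᵢ₋₁, hᵢ)` for `i < N` and `Λ_N = [h_{N-1}, h_N]`. -/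
def cell (N : ℕ) (h : Fin (N + 1) → ℝ) (i : Fin N) : Set ℝ :=
  if (i : ℕ) = N - 1 then Set.Icc (h i.castSucc) (h i.succ)
  else Set.Ico (h i.castSucc) (h i.succ)

/-- The cell probability `qᵢ(ℓ) = ∫_{Λᵢ} g(ℓ,t) μ(dt)`. -/
def qcell (μ : Measure ℝ) (g : ℝ → ℝ → ℝ) (N : ℕ) (h : Fin (N + 1) → ℝ)
    (i : Fin N) (ℓ : ℝ) : ℝ :=
  ∫ t in cell N h i, g ℓ t ∂μ

/-- The matrix `Q(ℓ) = [√q₁(ℓ)·Iₙ, …, √q_N(ℓ)·Iₙ]`. -/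
def Qmat (μ : Measure ℝ) (g : ℝ → ℝ → ℝ) (n N : ℕ) (h : Fin (N + 1) → ℝ) (ℓ : ℝ) :
    Matrix (Fin n) (Fin n × Fin N) ℝ :=
  Matrix.of fun a bj =>
    Real.sqrt (qcell μ g N h bj.2 ℓ) * (if a = bj.1 then (1 : ℝ) else 0)

/-- The conditional-expectation operator `E(P)(ℓ) = ∫ g(ℓ,t)·P(t) μ(dt)` (entrywise). -/
def Eop {n : ℕ} (μ : Measure ℝ) (g : ℝ → ℝ → ℝ)
    (P : ℝ → Matrix (Fin n) (Fin n) ℝ) (ℓ : ℝ) : Matrix (Fin n) (Fin n) ℝ :=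
  Matrix.of fun i j => ∫ t, g ℓ t * P t i j ∂μ

/-- The block matrix
`Ξ(P)(ℓ) = [[E(P)(ℓ)⁻¹, 0, A, B], [0, I, C, 0], [Aᵀ, Cᵀ, P, 0], [Bᵀ, 0, 0, γI]]`. -/
def XiP (n r : ℕ) (μ : Measure ℝ) (g : ℝ → ℝ → ℝ) (γ : ℝ)
    (A : ℝ → Matrix (Fin n) (Fin n) ℝ) (B : ℝ → Matrix (Fin n) (Fin r) ℝ)
    (C : ℝ → Matrix (Fin r) (Fin n) ℝ) (P : ℝ → Matrix (Fin n) (Fin n) ℝ) (ℓ : ℝ) :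
    Matrix ((Fin n ⊕ Fin r) ⊕ (Fin n ⊕ Fin r)) ((Fin n ⊕ Fin r) ⊕ (Fin n ⊕ Fin r)) ℝ :=
  Matrix.fromBlocks
    (Matrix.fromBlocks (Eop μ g P ℓ)⁻¹ 0 0 (1 : Matrix (Fin r) (Fin r) ℝ))
    (Matrix.fromBlocks (A ℓ) (B ℓ) (C ℓ) 0)
    (Matrix.fromBlocks (A ℓ) (B ℓ) (C ℓ) 0)ᵀ
    (Matrix.fromBlocks (P ℓ) 0 0 (γ • (1 : Matrix (Fin r) (Fin r) ℝ)))

end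

noncomputable section

/-- The row matrix `Qᵢ = [√pᵢ₁·Iₙ, …, √pᵢN·Iₙ]` built from a transition probability matrix. -/
def Qprob (n N : ℕ) (p : Fin N → Fin N → ℝ) (i : Fin N) :
    Matrix (Fin n) (Fin n × Fin N) ℝ :=
  Matrix.of fun a bj => Real.sqrt (p i bj.2) * (if a = bj.1 then (1 : ℝ) else 0)


section AuxLemmas

open Matrix

/-- Congruence by a (possibly rectangular) matrix whose transpose has trivial kernel
preserves positive definiteness, over `ℝ`. -/
lemma posDef_mul_mul_transpose {l m : Type*} [Fintype l] [Fintype m]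
    {M : Matrix l l ℝ} (hM : M.PosDef) (K : Matrix m l ℝ)
    (hK : ∀ x : m → ℝ, x ≠ 0 → Kᵀ *ᵥ x ≠ 0) : (K * M * Kᵀ).PosDef := by
  have h1 : (K * M * Kᵀ).IsHermitian := by
    have := (hM.posSemidef.mul_mul_conjTranspose_same K).1
    rwa [conjTranspose_eq_transpose_of_trivial] at this
  refine posDef_iff_dotProduct_mulVec.mpr ⟨h1, fun x hx => ?_⟩
  have h := hM.dotProduct_mulVec_pos (hK x hx)
  have e : star x ⬝ᵥ (K * M * Kᵀ) *ᵥ x = star (Kᵀ *ᵥ x) ⬝ᵥ M *ᵥ (Kᵀ *ᵥ x) := by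
    simp only [star_trivial, ← mulVec_mulVec]
    rw [dotProduct_mulVec x K, ← mulVec_transpose]
  rw [e]; exact h

/-- A principal submatrix (along an injective index map) of a positive definite matrix is
positive definite. -/
lemma posDef_submatrix {S T : Type*} [Fintype S] [Fintype T] [DecidableEq S] [DecidableEq T]
    {M : Matrix T T ℝ} (hM : M.PosDef) (e : S → T) (he : Function.Injective e) :
    (M.submatrix e e).PosDef := by
  classical
  set K : Matrix S T ℝ := Matrix.of (fun s t => if t = e s then 1 else 0) with hKdef
  have hsub : M.submatrix e e = K * M * Kᵀ := by
    ext s s'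
    simp [hKdef, Matrix.mul_apply, ite_mul, mul_ite, Finset.sum_ite_eq]
  rw [hsub]
  refine posDef_mul_mul_transpose hM K ?_
  intro x hx h0
  obtain ⟨s₀, hs₀⟩ := Function.ne_iff.mp hx
  apply hs₀
  have := congrFun h0 (e s₀)
  simpa [hKdef, Matrix.mulVec, dotProduct, he.eq_iff, Finset.sum_ite_eq] using this


lemma blockDiagonal_posDef {n N : ℕ} {P : Fin N → Matrix (Fin n) (Fin n) ℝ}
    (hP : ∀ k, (P k).PosDef) : (Matrix.blockDiagonal P).PosDef := by
  have hsym : ∀ k (a b : Fin n), P k a b = P k b a := by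
    intro k a b
    have := (hP k).1.apply a b
    simpa using this.symm
  refine posDef_iff_dotProduct_mulVec.mpr ⟨?_, ?_⟩
  · show _ = _
    ext ⟨a, k⟩ ⟨b, l⟩
    by_cases h : k = l
    · subst h
      simp [Matrix.conjTranspose_apply, Matrix.blockDiagonal_apply, hsym k b a]
    · simp [Matrix.conjTranspose_apply, Matrix.blockDiagonal_apply, h, Ne.symm h]
  · intro x hx
    obtain ⟨⟨a₀, k₀⟩, ha₀⟩ := Function.ne_iff.mp hx
    have key : star x ⬝ᵥ (Matrix.blockDiagonal P) *ᵥ x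
        = ∑ k : Fin N, (fun a => x (a, k)) ⬝ᵥ (P k) *ᵥ (fun b => x (b, k)) := by
      simp only [star_trivial, dotProduct, Matrix.mulVec, Matrix.blockDiagonal_apply,
        Fintype.sum_prod_type, ite_mul, zero_mul, Finset.sum_ite_eq, Finset.mem_univ, if_true]
      rw [Finset.sum_comm]
    rw [key]
    have hpos : 0 < (fun a => x (a, k₀)) ⬝ᵥ (P k₀) *ᵥ (fun b => x (b, k₀)) := by
      refine lt_of_lt_of_eq ((hP k₀).dotProduct_mulVec_pos (x := fun b => x (b, k₀)) ?_) (by simp)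
      intro h0
      exact ha₀ (congrFun h0 a₀)
    refine Finset.sum_pos' (fun k _ => ?_) ⟨k₀, Finset.mem_univ _, hpos⟩
    simpa using (hP k).posSemidef.dotProduct_mulVec_nonneg (fun a => x (a, k))


lemma schur_posDef {F G : Type*} [Fintype F] [Fintype G] [DecidableEq F] [DecidableEq G]
    {M₁ : Matrix F F ℝ} {U : Matrix F G ℝ} {D : Matrix G G ℝ} (hD : IsUnit D.det)
    (h : (Matrix.fromBlocks M₁ U Uᵀ D).PosDef) : (M₁ - U * D⁻¹ * Uᵀ).PosDef := by
  have key : (Matrix.fromCols (1 : Matrix F F ℝ) (-(U * D⁻¹))) * (Matrix.fromBlocks M₁ U Uᵀ D) *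
      (Matrix.fromCols (1 : Matrix F F ℝ) (-(U * D⁻¹)))ᵀ = M₁ - U * D⁻¹ * Uᵀ := by
    rw [transpose_fromCols, fromCols_mul_fromBlocks, fromCols_mul_fromRows]
    rw [Matrix.one_mul, Matrix.one_mul, Matrix.neg_mul, Matrix.neg_mul,
      Matrix.nonsing_inv_mul_cancel_right _ _ hD, Matrix.transpose_one, Matrix.mul_one,
      Matrix.transpose_neg, Matrix.transpose_mul]
    simp only [add_neg_cancel, Matrix.zero_mul, add_zero, Matrix.mul_neg, sub_eq_add_neg, neg_zero]
  rw [← key]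
  refine posDef_mul_mul_transpose h _ ?_
  intro x hx h0
  apply hx
  rw [transpose_fromCols, fromRows_mulVec] at h0
  funext s
  have h1 := congrFun h0 (Sum.inl s)
  simpa using h1


section PSum
variable {n N : ℕ} {p : Fin N → Fin N → ℝ} {Pmat : Fin N → Matrix (Fin n) (Fin n) ℝ}

lemma sum_smul_posDef (hp0 : ∀ i j, 0 ≤ p i j) (hp1 : ∀ i, ∑ j, p i j = 1)
    (hPmat : ∀ j, (Pmat j).PosDef) (i : Fin N) :
    (∑ j, p i j • Pmat j).PosDef := by
  have hsym : ∀ k (a b : Fin n), Pmat k a b = Pmat k b a := by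
    intro k a b
    have := (hPmat k).1.apply a b
    simpa using this.symm
  refine posDef_iff_dotProduct_mulVec.mpr ⟨?_, ?_⟩
  · show _ = _
    ext a b
    simp only [Matrix.conjTranspose_apply, Matrix.sum_apply, Matrix.smul_apply, star_trivial,
      smul_eq_mul]
    exact Finset.sum_congr rfl fun j _ => by rw [hsym j b a]
  · intro x hx
    have hsum : (∑ j, p i j • Pmat j) *ᵥ x = ∑ j, p i j • (Pmat j *ᵥ x) := by
      rw [show (∑ j, p i j • Pmat j) *ᵥ x
          = Matrix.mulVec.addMonoidHomLeft x (∑ j, p i j • Pmat j) from rfl,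
        map_sum]
      refine Finset.sum_congr rfl fun j _ => ?_
      show (p i j • Pmat j) *ᵥ x = _
      rw [Matrix.smul_mulVec]
    have key : star x ⬝ᵥ (∑ j, p i j • Pmat j) *ᵥ x
        = ∑ j, p i j * (x ⬝ᵥ Pmat j *ᵥ x) := by
      rw [star_trivial, hsum]
      have swap : (x ⬝ᵥ ∑ j, p i j • (Pmat j *ᵥ x)) = ∑ j, x ⬝ᵥ (p i j • (Pmat j *ᵥ x)) := by
        simp only [dotProduct, Finset.sum_apply, Finset.mul_sum]
        exact Finset.sum_comm
      rw [swap]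
      refine Finset.sum_congr rfl fun j _ => ?_
      rw [dotProduct_smul, smul_eq_mul]
    rw [key]
    have hex : ∃ j₀, 0 < p i j₀ := by
      by_contra h
      push_neg at h
      have : ∑ j, p i j = 0 := Finset.sum_eq_zero fun j _ => le_antisymm (h j) (hp0 i j)
      rw [hp1 i] at this; norm_num at this
    obtain ⟨j₀, hj₀⟩ := hex
    refine Finset.sum_pos' (fun j _ => mul_nonneg (hp0 i j) ?_)
      ⟨j₀, Finset.mem_univ _, mul_pos hj₀ ?_⟩
    · simpa using (hPmat j).posSemidef.dotProduct_mulVec_nonneg x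
    · simpa using (hPmat j₀).dotProduct_mulVec_pos hx

lemma Qprob_mul_blockDiag_mul_transpose (hp0 : ∀ i j, 0 ≤ p i j) (i : Fin N) :
    Qprob n N p i * Matrix.blockDiagonal Pmat * (Qprob n N p i)ᵀ
      = ∑ j, p i j • Pmat j := by
  ext a b
  simp only [Matrix.mul_apply, Matrix.transpose_apply, Qprob, Matrix.of_apply,
    Matrix.blockDiagonal_apply, Matrix.sum_apply, Matrix.smul_apply, smul_eq_mul,
    Fintype.sum_prod_type, mul_ite, mul_one, mul_zero, ite_mul, zero_mul,
    Finset.sum_ite_eq', Finset.sum_ite_eq, Finset.mem_univ, if_true]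
  rw [Finset.sum_comm]
  simp only [Finset.sum_ite_eq, Finset.mem_univ, if_true]
  refine Finset.sum_congr rfl fun j _ => ?_
  rw [mul_comm (Real.sqrt (p i j) * Pmat j a b), ← mul_assoc,
    Real.mul_self_sqrt (hp0 i j)]

end PSum

section Sub5
variable {n r N : ℕ}

def e5 : (((Fin n ⊕ Fin r) ⊕ (Fin n ⊕ Fin r)) ⊕ (Fin n × Fin N)) → T14 n r N :=
  Sum.elim (Sum.elim (Sum.elim j1 j2) (Sum.elim j3 j4)) j5

lemma e5_injective : Function.Injective (e5 (n := n) (r := r) (N := N)) := by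
  intro a b h
  rcases a with ((a | a) | (a | a)) | a <;> rcases b with ((b | b) | (b | b)) | b <;>
    simp_all [e5, j1, j2, j3, j4, j5]

set_option maxHeartbeats 2000000 in
lemma pi1_submatrix (γ σA σB σC σQ α β ρ : ℝ)
    (X A Pi : Matrix (Fin n) (Fin n) ℝ) (B : Matrix (Fin n) (Fin r) ℝ)
    (C : Matrix (Fin r) (Fin n) ℝ) (Q : Matrix (Fin n) (Fin n × Fin N) ℝ)
    (Υ : Matrix (Fin n × Fin N) (Fin n × Fin N) ℝ) :
    (Pi1 n r N γ σA σB σC σQ α β ρ X A Pi B C Q Υ).submatrix e5 e5 =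
      Matrix.fromBlocks
        (Matrix.fromBlocks (Matrix.fromBlocks (X + Xᵀ) 0 0 (1 : Matrix (Fin r) (Fin r) ℝ))
          (Matrix.fromBlocks (X * A) (X * B) C 0)
          (Matrix.fromBlocks (X * A) (X * B) C 0)ᵀ
          (Matrix.fromBlocks Pi 0 0 (γ • (1 : Matrix (Fin r) (Fin r) ℝ))))
        (Matrix.fromRows (Matrix.fromRows (Q * Υ) 0) 0)
        (Matrix.fromRows (Matrix.fromRows (Q * Υ) 0) 0)ᵀ
        Υ := by
  ext x y
  rcases x with ((a | a) | (a | a)) | a <;> rcases y with ((b | b) | (b | b)) | b <;>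
    simp only [Matrix.submatrix_apply, e5, Sum.elim_inl, Sum.elim_inr, Pi1, Matrix.add_apply,
      place, Matrix.of_apply, j1, j2, j3, j4, j5, j6, j7, j8, j9, j10, j11, j12, j13, j14,
      Sum.inl.injEq, Sum.inr.injEq, reduceCtorEq, ite_and, if_false, if_true, false_and,
      and_false, true_and, and_true, Finset.sum_ite_irrel, Finset.sum_const_zero,
      Finset.sum_ite_eq, Finset.mem_univ, add_zero, zero_add,
      Matrix.fromBlocks_apply₁₁, Matrix.fromBlocks_apply₁₂, Matrix.fromBlocks_apply₂₁,
      Matrix.fromBlocks_apply₂₂, Matrix.fromRows_apply_inl, Matrix.fromRows_apply_inr,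
      Matrix.transpose_apply, Matrix.zero_apply, Matrix.smul_apply, smul_eq_mul,
      Matrix.one_apply]


end Sub5

end AuxLemmas

/-- Proposition 9 of the paper: solutions of the gridding LMI problem, specialized to a finite
Markov chain with transition matrix `p`, satisfy the finite-state bounded-real-lemma LMIs. -/
theorem gridding_solution_satisfies_finite_BRL_LMI
    (N n r : ℕ) (hN : 0 < N) (hn : 0 < n) (hr : 0 < r)
    (γ : ℝ) (hγ : 0 < γ)
    (p : Fin N → Fin N → ℝ) (hp0 : ∀ i j, 0 ≤ p i j) (hp1 : ∀ i, ∑ j, p i j = 1)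
    (A : Fin N → Matrix (Fin n) (Fin n) ℝ) (B : Fin N → Matrix (Fin n) (Fin r) ℝ)
    (C : Fin N → Matrix (Fin r) (Fin n) ℝ)
    (X : Fin N → Matrix (Fin n) (Fin n) ℝ) (hX : ∀ i, IsUnit (X i))
    (Pmat : Fin N → Matrix (Fin n) (Fin n) ℝ) (hPmat : ∀ i, (Pmat i).PosDef)
    (σA σB σC σQ α β ρ : Fin N → ℝ)
    (hσA : ∀ i, 0 < σA i) (hσB : ∀ i, 0 < σB i) (hσC : ∀ i, 0 < σC i)
    (hσQ : ∀ i, 0 < σQ i) (hα : ∀ i, 0 < α i) (hβ : ∀ i, 0 < β i) (hρ : ∀ i, 0 < ρ i)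
    (hLMI : ∀ i, (Pi1 n r N γ (σA i) (σB i) (σC i) (σQ i) (α i) (β i) (ρ i)
        (X i) (A i) (Pmat i) (B i) (C i) (Qprob n N p i)
        (Matrix.blockDiagonal Pmat)).PosDef) :
    ∀ i, (Matrix.fromBlocks
        (Matrix.fromBlocks (∑ j, p i j • Pmat j) 0 0 (1 : Matrix (Fin r) (Fin r) ℝ))
        (Matrix.fromBlocks ((∑ j, p i j • Pmat j) * A i) ((∑ j, p i j • Pmat j) * B i)
          (C i) 0)
        (Matrix.fromBlocks ((A i)ᵀ * (∑ j, p i j • Pmat j)) (C i)ᵀ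
          ((B i)ᵀ * (∑ j, p i j • Pmat j)) 0)
        (Matrix.fromBlocks (Pmat i) 0 0 (γ • (1 : Matrix (Fin r) (Fin r) ℝ)))).PosDef := by
  intro i
  classical
  have hS : (∑ j, p i j • Pmat j).PosDef := sum_smul_posDef hp0 hp1 hPmat i
  set S : Matrix (Fin n) (Fin n) ℝ := ∑ j, p i j • Pmat j with hSdef
  set Υmat : Matrix (Fin n × Fin N) (Fin n × Fin N) ℝ := Matrix.blockDiagonal Pmat with hΥdef
  have hΥ : Υmat.PosDef := blockDiagonal_posDef hPmat
  set Q : Matrix (Fin n) (Fin n × Fin N) ℝ := Qprob n N p i with hQdef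
  have hQ : Q * Υmat * Qᵀ = S := Qprob_mul_blockDiag_mul_transpose hp0 i
  have hdS : IsUnit S.det := hS.det_pos.ne'.isUnit
  have hdΥ : IsUnit Υmat.det := hΥ.det_pos.ne'.isUnit
  have hdX : IsUnit (X i).det := (Matrix.isUnit_iff_isUnit_det _).mp (hX i)
  have hdXt : IsUnit ((X i)ᵀ).det := by rwa [Matrix.det_transpose]
  have hSt : Sᵀ = S := by
    rw [← Matrix.conjTranspose_eq_transpose_of_trivial]; exact hS.1
  have hΥt : Υmatᵀ = Υmat := by
    rw [← Matrix.conjTranspose_eq_transpose_of_trivial]; exact hΥ.1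
  -- the principal 5×5-block submatrix of the LMI is positive definite
  have hSub := posDef_submatrix (hLMI i) e5 e5_injective
  rw [pi1_submatrix] at hSub
  -- take the Schur complement with respect to the fifth diagonal block
  have hSchur := schur_posDef hdΥ hSub
  set U : Matrix ((Fin n ⊕ Fin r) ⊕ (Fin n ⊕ Fin r)) (Fin n × Fin N) ℝ :=
    Matrix.fromRows (Matrix.fromRows (Q * Υmat) 0) 0 with hUdef
  have hU1 : U * Υmat⁻¹ = Matrix.fromRows (Matrix.fromRows Q 0) 0 := by
    rw [hUdef, Matrix.fromRows_mul, Matrix.fromRows_mul, Matrix.zero_mul, Matrix.zero_mul,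
      Matrix.mul_nonsing_inv_cancel_right _ _ hdΥ]
  have hU2 : Uᵀ = Matrix.fromCols (Matrix.fromCols (Q * Υmat)ᵀ 0) 0 := by
    rw [hUdef, Matrix.transpose_fromRows, Matrix.transpose_fromRows, Matrix.transpose_zero,
      Matrix.transpose_zero]
  have hUeq : U * Υmat⁻¹ * Uᵀ = Matrix.fromBlocks (Matrix.fromBlocks S 0 0 0) 0 0 0 := by
    rw [hU1, hU2]
    simp only [Matrix.fromRows_mul_fromCols, Matrix.mul_zero, Matrix.zero_mul]
    rw [Matrix.transpose_mul, hΥt, ← Matrix.mul_assoc, hQ]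
  rw [hUeq] at hSchur
  have hdiff :
      Matrix.fromBlocks
          (Matrix.fromBlocks (X i + (X i)ᵀ) 0 0 (1 : Matrix (Fin r) (Fin r) ℝ))
          (Matrix.fromBlocks (X i * A i) (X i * B i) (C i) 0)
          (Matrix.fromBlocks (X i * A i) (X i * B i) (C i) 0)ᵀ
          (Matrix.fromBlocks (Pmat i) 0 0 (γ • (1 : Matrix (Fin r) (Fin r) ℝ))) -
        Matrix.fromBlocks (Matrix.fromBlocks S 0 0 0) 0 0 0
      = Matrix.fromBlocks
          (Matrix.fromBlocks (X i + (X i)ᵀ - S) 0 0 (1 : Matrix (Fin r) (Fin r) ℝ))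
          (Matrix.fromBlocks (X i * A i) (X i * B i) (C i) 0)
          (Matrix.fromBlocks (X i * A i) (X i * B i) (C i) 0)ᵀ
          (Matrix.fromBlocks (Pmat i) 0 0 (γ • (1 : Matrix (Fin r) (Fin r) ℝ))) := by
    simp only [sub_eq_add_neg, Matrix.fromBlocks_neg, Matrix.fromBlocks_add, neg_zero,
      add_zero]
  rw [hdiff] at hSchur
  -- add a positive semidefinite completion-of-squares term
  set K₃ : Matrix ((Fin n ⊕ Fin r) ⊕ (Fin n ⊕ Fin r)) (Fin n) ℝ :=
    Matrix.fromRows (Matrix.fromRows (X i - S) 0) 0 with hK₃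
  have hW : (K₃ * S⁻¹ * K₃ᵀ).PosSemidef := by
    have h := (hS.inv.posSemidef).mul_mul_conjTranspose_same K₃
    rwa [Matrix.conjTranspose_eq_transpose_of_trivial] at h
  have hW1 : K₃ * S⁻¹ = Matrix.fromRows (Matrix.fromRows ((X i - S) * S⁻¹) 0) 0 := by
    rw [hK₃, Matrix.fromRows_mul, Matrix.fromRows_mul, Matrix.zero_mul, Matrix.zero_mul]
  have hW2 : K₃ᵀ = Matrix.fromCols (Matrix.fromCols (X i - S)ᵀ 0) 0 := by
    rw [hK₃, Matrix.transpose_fromRows, Matrix.transpose_fromRows, Matrix.transpose_zero,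
      Matrix.transpose_zero]
  have hWeq : K₃ * S⁻¹ * K₃ᵀ
      = Matrix.fromBlocks
          (Matrix.fromBlocks ((X i - S) * S⁻¹ * (X i - S)ᵀ) 0 0 0) 0 0 0 := by
    rw [hW1, hW2]
    simp only [Matrix.fromRows_mul_fromCols, Matrix.mul_zero, Matrix.zero_mul]
  rw [hWeq] at hW
  have hM2 := hSchur.add_posSemidef hW
  have hkey : X i + (X i)ᵀ - S + (X i - S) * S⁻¹ * (X i - S)ᵀ = X i * S⁻¹ * (X i)ᵀ := by
    have ht : (X i - S)ᵀ = (X i)ᵀ - S := by rw [Matrix.transpose_sub, hSt]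
    rw [ht, Matrix.sub_mul, Matrix.mul_nonsing_inv _ hdS, Matrix.sub_mul, Matrix.one_mul,
      Matrix.mul_sub, Matrix.nonsing_inv_mul_cancel_right _ _ hdS]
    abel
  have hsum :
      Matrix.fromBlocks
          (Matrix.fromBlocks (X i + (X i)ᵀ - S) 0 0 (1 : Matrix (Fin r) (Fin r) ℝ))
          (Matrix.fromBlocks (X i * A i) (X i * B i) (C i) 0)
          (Matrix.fromBlocks (X i * A i) (X i * B i) (C i) 0)ᵀ
          (Matrix.fromBlocks (Pmat i) 0 0 (γ • (1 : Matrix (Fin r) (Fin r) ℝ))) +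
        Matrix.fromBlocks
          (Matrix.fromBlocks ((X i - S) * S⁻¹ * (X i - S)ᵀ) 0 0 0) 0 0 0
      = Matrix.fromBlocks
          (Matrix.fromBlocks (X i * S⁻¹ * (X i)ᵀ) 0 0 (1 : Matrix (Fin r) (Fin r) ℝ))
          (Matrix.fromBlocks (X i * A i) (X i * B i) (C i) 0)
          (Matrix.fromBlocks (X i * A i) (X i * B i) (C i) 0)ᵀ
          (Matrix.fromBlocks (Pmat i) 0 0 (γ • (1 : Matrix (Fin r) (Fin r) ℝ))) := by
    rw [Matrix.fromBlocks_add, Matrix.fromBlocks_add, hkey]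
    simp only [add_zero]
  rw [hsum] at hM2
  -- final congruence transformation
  set T : Matrix ((Fin n ⊕ Fin r) ⊕ (Fin n ⊕ Fin r)) ((Fin n ⊕ Fin r) ⊕ (Fin n ⊕ Fin r)) ℝ :=
    Matrix.fromBlocks
      (Matrix.fromBlocks (S * (X i)⁻¹) 0 0 (1 : Matrix (Fin r) (Fin r) ℝ)) 0 0
      (1 : Matrix (Fin n ⊕ Fin r) (Fin n ⊕ Fin r) ℝ) with hT
  have hTdet : IsUnit T.det := by
    rw [hT, Matrix.det_fromBlocks_zero₂₁, Matrix.det_fromBlocks_zero₂₁, Matrix.det_one,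
      Matrix.det_one, mul_one, mul_one, Matrix.det_mul, Matrix.det_nonsing_inv]
    exact hdS.mul (isUnit_ringInverse.mpr hdX)
  have hTinj : ∀ x : ((Fin n ⊕ Fin r) ⊕ (Fin n ⊕ Fin r)) → ℝ, x ≠ 0 → Tᵀ *ᵥ x ≠ 0 := by
    intro x hx h0
    have hdTt : IsUnit Tᵀ.det := by rwa [Matrix.det_transpose]
    apply hx
    have h1 := congrArg (fun v => (Tᵀ)⁻¹ *ᵥ v) h0
    simpa [Matrix.mulVec_mulVec, Matrix.nonsing_inv_mul _ hdTt] using h1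
  have hfin := posDef_mul_mul_transpose hM2 T hTinj
  have e11 : S * (X i)⁻¹ * (X i * S⁻¹ * (X i)ᵀ) * (S * (X i)⁻¹)ᵀ = S := by
    rw [Matrix.transpose_mul, Matrix.transpose_nonsing_inv, hSt]
    simp only [Matrix.mul_assoc]
    rw [Matrix.mul_nonsing_inv_cancel_left _ _ hdXt, Matrix.nonsing_inv_mul _ hdS,
      Matrix.mul_one, Matrix.nonsing_inv_mul _ hdX, Matrix.mul_one]
  have e12a : S * (X i)⁻¹ * (X i * A i) = S * A i := by
    simp only [Matrix.mul_assoc]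
    rw [Matrix.nonsing_inv_mul_cancel_left _ _ hdX]
  have e12b : S * (X i)⁻¹ * (X i * B i) = S * B i := by
    simp only [Matrix.mul_assoc]
    rw [Matrix.nonsing_inv_mul_cancel_left _ _ hdX]
  have e21a : (X i * A i)ᵀ * (S * (X i)⁻¹)ᵀ = (A i)ᵀ * S := by
    rw [Matrix.transpose_mul, Matrix.transpose_mul, Matrix.transpose_nonsing_inv, hSt]
    simp only [Matrix.mul_assoc]
    rw [Matrix.mul_nonsing_inv_cancel_left _ _ hdXt]
  have e21b : (X i * B i)ᵀ * (S * (X i)⁻¹)ᵀ = (B i)ᵀ * S := by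
    rw [Matrix.transpose_mul, Matrix.transpose_mul, Matrix.transpose_nonsing_inv, hSt]
    simp only [Matrix.mul_assoc]
    rw [Matrix.mul_nonsing_inv_cancel_left _ _ hdXt]
  have hcomp :
      T * (Matrix.fromBlocks
          (Matrix.fromBlocks (X i * S⁻¹ * (X i)ᵀ) 0 0 (1 : Matrix (Fin r) (Fin r) ℝ))
          (Matrix.fromBlocks (X i * A i) (X i * B i) (C i) 0)
          (Matrix.fromBlocks (X i * A i) (X i * B i) (C i) 0)ᵀ
          (Matrix.fromBlocks (Pmat i) 0 0 (γ • (1 : Matrix (Fin r) (Fin r) ℝ)))) * Tᵀ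
      = Matrix.fromBlocks
          (Matrix.fromBlocks S 0 0 (1 : Matrix (Fin r) (Fin r) ℝ))
          (Matrix.fromBlocks (S * A i) (S * B i) (C i) 0)
          (Matrix.fromBlocks ((A i)ᵀ * S) (C i)ᵀ ((B i)ᵀ * S) 0)
          (Matrix.fromBlocks (Pmat i) 0 0 (γ • (1 : Matrix (Fin r) (Fin r) ℝ))) := by
    rw [hT]
    simp only [Matrix.fromBlocks_transpose, Matrix.transpose_zero, Matrix.transpose_one,
      Matrix.fromBlocks_multiply, Matrix.zero_mul, Matrix.mul_zero, Matrix.one_mul,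
      Matrix.mul_one, add_zero, zero_add]
    rw [e11, e12a, e12b, e21a, e21b]
  rw [hcomp] at hfin
  exact hfin

end
end

section
/- Let γ > 0. Suppose P : Θ → Sym(n,ℝ) is measurable, essentially bounded and uniformly positive, and that Ξ(P) is uniformly positive, i.e. there is δ > 0 with Ξ(P)(ℓ) − δ·I positive semidefinite for μ-a.e. ℓ. Then there exists ε₀ > 0 with the following property: for every finite partition of [a,b] into intervals and every choice of symmetric positive definite matrices Pᵢ (one per interval), if the piecewise-constant family P_c : Θ → Sym(n,ℝ) taking value Pᵢ on the i-th interval satisfies ‖P(ℓ) − P_c(ℓ)‖ ≤ ε₀ for μ-a.e. ℓ, then P_c is uniformly positive and Ξ(P_c) is uniformly positive (there exists δ' > 0 with Ξ(P_c)(ℓ) ≥ δ'·I for μ-a.e. ℓ). -/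
open MeasureTheory Matrix
open scoped Matrix.Norms.L2Operator

noncomputable section


namespace Lem2

section Bridge
variable {k l : Type*} [Fintype k] [Fintype l] [DecidableEq k] [DecidableEq l]

omit [DecidableEq k] [DecidableEq l] in
lemma dot_self_nonneg (x : k → ℝ) : 0 ≤ x ⬝ᵥ x :=
  Finset.sum_nonneg fun _ _ => mul_self_nonneg _

omit [DecidableEq k] [DecidableEq l] in
lemma norm_symm_eq (x : k → ℝ) :
    ‖(EuclideanSpace.equiv k ℝ).symm x‖ = Real.sqrt (x ⬝ᵥ x) := by
  rw [EuclideanSpace.norm_eq]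
  congr 1
  simp [dotProduct, sq]

omit [DecidableEq k] [DecidableEq l] in
lemma dot_CS (x y : k → ℝ) : |x ⬝ᵥ y| ≤ Real.sqrt (x ⬝ᵥ x) * Real.sqrt (y ⬝ᵥ y) := by
  have h := abs_real_inner_le_norm ((EuclideanSpace.equiv k ℝ).symm x)
      ((EuclideanSpace.equiv k ℝ).symm y)
  rw [norm_symm_eq, norm_symm_eq] at h
  have h2 : (inner ℝ ((EuclideanSpace.equiv k ℝ).symm x) ((EuclideanSpace.equiv k ℝ).symm y) : ℝ)
      = x ⬝ᵥ y := by
    simp [PiLp.inner_apply, RCLike.inner_apply, dotProduct, mul_comm]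
  rwa [h2] at h

omit [DecidableEq k] in
lemma form_le_norm (M : Matrix k l ℝ) (x : k → ℝ) (y : l → ℝ) :
    |x ⬝ᵥ M *ᵥ y| ≤ ‖M‖ * Real.sqrt (x ⬝ᵥ x) * Real.sqrt (y ⬝ᵥ y) := by
  have h1 : |x ⬝ᵥ M *ᵥ y| ≤ Real.sqrt (x ⬝ᵥ x) * Real.sqrt ((M *ᵥ y) ⬝ᵥ (M *ᵥ y)) := dot_CS _ _
  have h2 : Real.sqrt ((M *ᵥ y) ⬝ᵥ (M *ᵥ y)) ≤ ‖M‖ * Real.sqrt (y ⬝ᵥ y) := by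
    have h := M.l2_opNorm_mulVec ((EuclideanSpace.equiv l ℝ).symm y)
    rw [norm_symm_eq, norm_symm_eq] at h
    exact h
  have hx := Real.sqrt_nonneg (x ⬝ᵥ x)
  nlinarith [Real.sqrt_nonneg ((M *ᵥ y) ⬝ᵥ (M *ᵥ y)), Real.sqrt_nonneg (y ⬝ᵥ y),
    norm_nonneg M]

omit [DecidableEq k] in
lemma opNorm_le_of_mulVec (M : Matrix k l ℝ) {a : ℝ} (ha : 0 ≤ a)
    (h : ∀ y : l → ℝ, Real.sqrt ((M *ᵥ y) ⬝ᵥ (M *ᵥ y)) ≤ a * Real.sqrt (y ⬝ᵥ y)) :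
    ‖M‖ ≤ a := by
  rw [Matrix.l2_opNorm_def]
  refine ContinuousLinearMap.opNorm_le_bound _ ha fun y => ?_
  have h1 : ((Matrix.toEuclideanLin.trans LinearMap.toContinuousLinearMap) M) y
      = (EuclideanSpace.equiv k ℝ).symm (M *ᵥ ((EuclideanSpace.equiv l ℝ) y)) := rfl
  rw [h1, norm_symm_eq]
  have hy : ‖y‖
      = Real.sqrt (((EuclideanSpace.equiv l ℝ) y) ⬝ᵥ ((EuclideanSpace.equiv l ℝ) y)) := by
    rw [← norm_symm_eq]; rfl
  rw [hy]
  exact h _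

omit [DecidableEq k] in
lemma opNorm_le_of_form (M : Matrix k l ℝ) {a : ℝ} (ha : 0 ≤ a)
    (h : ∀ (x : k → ℝ) (y : l → ℝ),
      |x ⬝ᵥ M *ᵥ y| ≤ a * Real.sqrt (x ⬝ᵥ x) * Real.sqrt (y ⬝ᵥ y)) :
    ‖M‖ ≤ a := by
  refine opNorm_le_of_mulVec M ha fun y => ?_
  set z := M *ᵥ y with hz
  have h1 : z ⬝ᵥ z ≤ a * Real.sqrt (z ⬝ᵥ z) * Real.sqrt (y ⬝ᵥ y) := by
    calc z ⬝ᵥ z = z ⬝ᵥ M *ᵥ y := by rw [hz]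
    _ ≤ |z ⬝ᵥ M *ᵥ y| := le_abs_self _
    _ ≤ a * Real.sqrt (z ⬝ᵥ z) * Real.sqrt (y ⬝ᵥ y) := h z y
  have h2 : Real.sqrt (z ⬝ᵥ z) ^ 2 = z ⬝ᵥ z := Real.sq_sqrt (dot_self_nonneg z)
  nlinarith [Real.sqrt_nonneg (z ⬝ᵥ z), Real.sqrt_nonneg (y ⬝ᵥ y),
    mul_nonneg ha (Real.sqrt_nonneg (y ⬝ᵥ y))]

lemma entry_le_norm (M : Matrix k l ℝ) (i : k) (j : l) :
    |M i j| ≤ ‖M‖ := by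
  have h := form_le_norm M (Pi.single i 1) (Pi.single j 1)
  have h1 : (Pi.single i 1 : k → ℝ) ⬝ᵥ M *ᵥ (Pi.single j 1) = M i j := by
    simp [Matrix.mulVec_single]
  have h2 : (Pi.single i 1 : k → ℝ) ⬝ᵥ Pi.single i 1 = 1 := by simp [dotProduct_single]
  have h3 : (Pi.single j 1 : l → ℝ) ⬝ᵥ Pi.single j 1 = 1 := by simp [dotProduct_single]
  rw [h1, h2, h3] at h
  simpa using h

omit [Fintype k] [DecidableEq k] [DecidableEq l] in
lemma star_id (x : k → ℝ) : star x = x := by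
  funext i; simp

omit [DecidableEq l] in
lemma posDef_of_ge {S : Matrix k k ℝ} {ξ : ℝ} (hξ : 0 < ξ) (hsymm : S.IsHermitian)
    (h : ∀ x, ξ * (x ⬝ᵥ x) ≤ x ⬝ᵥ S *ᵥ x) : S.PosDef := by
  refine posDef_iff_dotProduct_mulVec.mpr ⟨hsymm, fun x hx => ?_⟩
  rw [star_id]
  have hd : 0 < x ⬝ᵥ x :=
    lt_of_le_of_ne (dot_self_nonneg x) (fun hc => hx (dotProduct_self_eq_zero.mp hc.symm))
  calc (0:ℝ) < ξ * (x ⬝ᵥ x) := by positivity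
  _ ≤ x ⬝ᵥ S *ᵥ x := h x

omit [DecidableEq l] in
lemma inv_norm_le {S : Matrix k k ℝ} {ξ : ℝ} (hξ : 0 < ξ) (hsymm : S.IsHermitian)
    (h : ∀ x, ξ * (x ⬝ᵥ x) ≤ x ⬝ᵥ S *ᵥ x) : ‖S⁻¹‖ ≤ 1 / ξ := by
  have hpd := posDef_of_ge hξ hsymm h
  have hdet : IsUnit S.det := hpd.det_pos.ne'.isUnit
  refine opNorm_le_of_mulVec _ (by positivity) fun y => ?_
  set w := S⁻¹ *ᵥ y with hw
  have hSw : S *ᵥ w = y := by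
    rw [hw, Matrix.mulVec_mulVec, Matrix.mul_nonsing_inv _ hdet, Matrix.one_mulVec]
  have k1 : ξ * (w ⬝ᵥ w) ≤ w ⬝ᵥ S *ᵥ w := h w
  have k2 : w ⬝ᵥ S *ᵥ w ≤ Real.sqrt (w ⬝ᵥ w) * Real.sqrt (y ⬝ᵥ y) := by
    rw [hSw]
    exact le_trans (le_abs_self _) (dot_CS w y)
  have h2 : Real.sqrt (w ⬝ᵥ w) ^ 2 = w ⬝ᵥ w := Real.sq_sqrt (dot_self_nonneg w)
  rw [div_mul_eq_mul_div, le_div_iff₀ hξ]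
  rcases eq_or_lt_of_le (Real.sqrt_nonneg (w ⬝ᵥ w)) with hs | hs
  · nlinarith [Real.sqrt_nonneg (y ⬝ᵥ y)]
  · nlinarith [Real.sqrt_nonneg (y ⬝ᵥ y), mul_pos hs hξ]

omit [DecidableEq l] in
lemma inv_sub_inv' {S T : Matrix k k ℝ} (hS : IsUnit S.det) (hT : IsUnit T.det) :
    S⁻¹ - T⁻¹ = S⁻¹ * (T - S) * T⁻¹ := by
  rw [Matrix.mul_sub, Matrix.nonsing_inv_mul _ hS, Matrix.sub_mul, Matrix.one_mul,
    Matrix.mul_assoc, Matrix.mul_nonsing_inv _ hT, Matrix.mul_one]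

omit [DecidableEq l] in
lemma form_of_psd_sub {S : Matrix k k ℝ} {c : ℝ}
    (hp : (S - c • 1).PosSemidef) (x : k → ℝ) : c * (x ⬝ᵥ x) ≤ x ⬝ᵥ S *ᵥ x := by
  have h := (posSemidef_iff_dotProduct_mulVec.mp hp).2 x
  rw [star_id, Matrix.sub_mulVec, dotProduct_sub, Matrix.smul_mulVec,
    Matrix.one_mulVec, dotProduct_smul, smul_eq_mul] at h
  linarith

omit [DecidableEq l] in
lemma smul_one_herm (c : ℝ) : ((c • (1 : Matrix k k ℝ))).IsHermitian := by
  unfold Matrix.IsHermitian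
  simp

omit [DecidableEq l] in
lemma herm_of_psd_sub {S : Matrix k k ℝ} {c : ℝ}
    (hp : (S - c • 1).PosSemidef) : S.IsHermitian := by
  have h2 := hp.1.add (smul_one_herm c)
  simpa using h2

omit [DecidableEq l] in
lemma psd_of_form {S : Matrix k k ℝ} {c : ℝ} (hh : S.IsHermitian)
    (h : ∀ x, c * (x ⬝ᵥ x) ≤ x ⬝ᵥ S *ᵥ x) : (S - c • 1).PosSemidef := by
  refine posSemidef_iff_dotProduct_mulVec.mpr ⟨hh.sub (smul_one_herm c), fun x => ?_⟩
  rw [star_id, Matrix.sub_mulVec, dotProduct_sub, Matrix.smul_mulVec,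
    Matrix.one_mulVec, dotProduct_smul, smul_eq_mul]
  linarith [h x]

omit [Fintype l] [DecidableEq k] [DecidableEq l] in
lemma herm_of_isSymm {S : Matrix k k ℝ} (h : S.IsSymm) : S.IsHermitian := by
  unfold Matrix.IsHermitian
  ext i j
  simp only [Matrix.conjTranspose_apply, star_trivial]
  have h2 : S j i = Sᵀ i j := rfl
  rw [h2, h]

omit [Fintype l] [DecidableEq k] [DecidableEq l] in
lemma isSymm_of_herm {S : Matrix k k ℝ} (h : S.IsHermitian) : S.IsSymm := by
  unfold Matrix.IsSymm
  ext i j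
  rw [Matrix.transpose_apply]
  calc S j i = star (S j i) := (star_trivial _).symm
  _ = Sᴴ i j := rfl
  _ = S i j := by rw [h]

lemma dot_split {α β : Type*} [Fintype α] [Fintype β] (x y : α ⊕ β → ℝ) :
    x ⬝ᵥ y = (x ∘ Sum.inl) ⬝ᵥ (y ∘ Sum.inl) + (x ∘ Sum.inr) ⬝ᵥ (y ∘ Sum.inr) := by
  simp [dotProduct, Fintype.sum_sum_type, Function.comp]

lemma blockdiag_form {α β : Type*} [Fintype α] [Fintype β]
    (A : Matrix α α ℝ) (D : Matrix β β ℝ) (x : α ⊕ β → ℝ) :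
    x ⬝ᵥ (Matrix.fromBlocks A 0 0 D) *ᵥ x
      = (x ∘ Sum.inl) ⬝ᵥ A *ᵥ (x ∘ Sum.inl) + (x ∘ Sum.inr) ⬝ᵥ D *ᵥ (x ∘ Sum.inr) := by
  rw [Matrix.fromBlocks_mulVec, dot_split]
  simp

end Bridge

section Cells

lemma cell_bounds {M : ℕ} {h : Fin (M + 1) → ℝ} {i : Fin M} {t : ℝ}
    (ht : t ∈ cell M h i) : h i.castSucc ≤ t ∧ t ≤ h i.succ := by
  unfold cell at ht
  split_ifs at ht with hc
  · exact ⟨ht.1, ht.2⟩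
  · exact ⟨ht.1, ht.2.le⟩

lemma cell_measurable {M : ℕ} (h : Fin (M + 1) → ℝ) (i : Fin M) :
    MeasurableSet (cell M h i) := by
  unfold cell
  split_ifs
  · exact measurableSet_Icc
  · exact measurableSet_Ico

lemma cell_disjoint {M : ℕ} {h : Fin (M + 1) → ℝ} (hmono : StrictMono h) {i j : Fin M} {t : ℝ}
    (hi : t ∈ cell M h i) (hj : t ∈ cell M h j) : i = j := by
  by_contra hne
  wlog hlt : i < j generalizing i j
  · exact this hj hi (Ne.symm hne) (lt_of_le_of_ne (not_lt.mp hlt) (Ne.symm hne))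
  have hiM : (i : ℕ) ≠ M - 1 := by
    have hj' : (j : ℕ) ≤ M - 1 := by have := j.isLt; omega
    have h3 := hlt
    rw [Fin.lt_def] at h3
    omega
  have hi' : t < h i.succ := by
    unfold cell at hi
    rw [if_neg hiM] at hi
    exact hi.2
  have hle : h i.succ ≤ h j.castSucc := by
    apply hmono.monotone
    rw [Fin.le_def]
    simp only [Fin.val_succ, Fin.coe_castSucc]
    rw [Fin.lt_def] at hlt
    omega
  have := (cell_bounds hj).1
  linarith

lemma cell_cover {M : ℕ} (hM : 0 < M) {h : Fin (M + 1) → ℝ} (hmono : StrictMono h)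
    {t : ℝ} (ht : t ∈ Set.Icc (h 0) (h (Fin.last M))) : ∃ i : Fin M, t ∈ cell M h i := by
  classical
  set s : Finset (Fin (M + 1)) := Finset.univ.filter fun j => h j ≤ t with hs
  have h0s : (0 : Fin (M + 1)) ∈ s := by
    simp [hs, ht.1]
  have hsne : s.Nonempty := ⟨0, h0s⟩
  set j := s.max' hsne with hj
  have hjle : h j ≤ t := by
    have := s.max'_mem hsne
    simpa [hs] using this
  by_cases hjlast : j = Fin.last M
  · have htb : t = h (Fin.last M) := le_antisymm ht.2 (by rw [← hjlast]; exact hjle)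
    refine ⟨⟨M - 1, by omega⟩, ?_⟩
    unfold cell
    rw [if_pos rfl]
    constructor
    · calc h _ ≤ h (Fin.last M) := hmono.monotone (Fin.le_last _)
      _ = t := htb.symm
    · have h4 : (⟨M - 1, by omega⟩ : Fin M).succ = Fin.last M := by
        ext; simp [Fin.last]; omega
      rw [h4, ← htb]
  · have hjlt : (j : ℕ) < M := by
      have h5 := j.isLt
      have h6 : (j : ℕ) ≠ M := fun hc => hjlast (by ext; simp [Fin.last, hc])
      omega
    refine ⟨⟨j, hjlt⟩, ?_⟩
    have hcast : (⟨(j : ℕ), hjlt⟩ : Fin M).castSucc = j := by ext; simp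
    have hlt2 : t < h (⟨(j : ℕ), hjlt⟩ : Fin M).succ := by
      by_contra hcon
      push_neg at hcon
      have hmem : (⟨(j : ℕ), hjlt⟩ : Fin M).succ ∈ s := by
        rw [hs]
        simp only [Finset.mem_filter, Finset.mem_univ, true_and]
        exact hcon
      have h7 := s.le_max' _ hmem
      rw [← hj] at h7
      rw [Fin.le_def] at h7
      simp only [Fin.val_succ] at h7
      omega
    unfold cell
    split_ifs
    · exact ⟨by rw [hcast]; exact hjle, hlt2.le⟩
    · exact ⟨by rw [hcast]; exact hjle, hlt2⟩

end Cells

section EopFacts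

lemma Eop_form {n : ℕ} (μ : Measure ℝ) (g : ℝ → ℝ → ℝ)
    (F : ℝ → Matrix (Fin n) (Fin n) ℝ) (ℓ : ℝ)
    (hint : ∀ i j, Integrable (fun t => g ℓ t * F t i j) μ) (x y : Fin n → ℝ) :
    x ⬝ᵥ (Eop μ g F ℓ) *ᵥ y = ∫ t, g ℓ t * (x ⬝ᵥ F t *ᵥ y) ∂μ := by
  have step1 : x ⬝ᵥ (Eop μ g F ℓ) *ᵥ y
      = ∑ i, ∑ j, (x i * y j) * ∫ t, g ℓ t * F t i j ∂μ := by
    simp only [Eop, dotProduct, mulVec, Matrix.of_apply, Finset.mul_sum]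
    refine Finset.sum_congr rfl fun i _ => Finset.sum_congr rfl fun j _ => by ring
  rw [step1]
  have step2 : ∀ (i j : Fin n), (x i * y j) * ∫ t, g ℓ t * F t i j ∂μ
      = ∫ t, (x i * y j) * (g ℓ t * F t i j) ∂μ := fun i j =>
    (MeasureTheory.integral_const_mul _ _).symm
  simp only [step2]
  have inner : ∀ i : Fin n, ∑ j, ∫ t, (x i * y j) * (g ℓ t * F t i j) ∂μ
      = ∫ t, ∑ j, (x i * y j) * (g ℓ t * F t i j) ∂μ :=
    fun i => (MeasureTheory.integral_finset_sum _ fun j _ => (hint i j).const_mul _).symm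
  simp only [inner]
  rw [← MeasureTheory.integral_finset_sum _ fun i _ =>
    MeasureTheory.integrable_finset_sum _ fun j _ => (hint i j).const_mul _]
  congr 1
  funext t
  simp only [dotProduct, mulVec, Finset.mul_sum]
  refine Finset.sum_congr rfl fun i _ => Finset.sum_congr rfl fun j _ => by ring

lemma Eop_sub {n : ℕ} (μ : Measure ℝ) (g : ℝ → ℝ → ℝ)
    (F1 F2 : ℝ → Matrix (Fin n) (Fin n) ℝ) (ℓ : ℝ)
    (h1 : ∀ i j, Integrable (fun t => g ℓ t * F1 t i j) μ)
    (h2 : ∀ i j, Integrable (fun t => g ℓ t * F2 t i j) μ) :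
    Eop μ g (fun t => F1 t - F2 t) ℓ = Eop μ g F1 ℓ - Eop μ g F2 ℓ := by
  ext i j
  simp only [Eop, Matrix.of_apply, Matrix.sub_apply, mul_sub]
  exact MeasureTheory.integral_sub (h1 i j) (h2 i j)

lemma Eop_herm {n : ℕ} (μ : Measure ℝ) (g : ℝ → ℝ → ℝ)
    (F : ℝ → Matrix (Fin n) (Fin n) ℝ) (ℓ : ℝ)
    (hsym : ∀ᵐ t ∂μ, (F t).IsSymm) :
    (Eop μ g F ℓ).IsHermitian := by
  rw [Matrix.IsHermitian]
  ext i j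
  simp only [Eop, Matrix.conjTranspose_apply, Matrix.of_apply, star_trivial]
  refine MeasureTheory.integral_congr_ae ?_
  filter_upwards [hsym] with t ht
  have h2 : F t j i = F t i j := by
    conv_lhs => rw [← ht]
    rfl
  rw [h2]

lemma int_helper {a b : ℝ} (hab : a ≤ b) (G F : ℝ → ℝ)
    (hG : ContinuousOn G (Set.Icc a b))
    (hF : AEMeasurable F ((volume : Measure ℝ).restrict (Set.Icc a b))) {C : ℝ}
    (hC : ∀ᵐ t ∂((volume : Measure ℝ).restrict (Set.Icc a b)), |F t| ≤ C) :
    Integrable (fun t => G t * F t) ((volume : Measure ℝ).restrict (Set.Icc a b)) := by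
  obtain ⟨K, hK⟩ := (isCompact_Icc (a := a) (b := b)).exists_bound_of_continuousOn hG
  have hK0 : 0 ≤ K := le_trans (norm_nonneg (G a)) (hK a (by simp [hab]))
  have hmeas : AEStronglyMeasurable (fun t => G t * F t)
      ((volume : Measure ℝ).restrict (Set.Icc a b)) :=
    (hG.aestronglyMeasurable measurableSet_Icc).mul hF.aestronglyMeasurable
  refine MeasureTheory.Integrable.mono' (integrable_const (K * C)) hmeas ?_
  filter_upwards [hC, MeasureTheory.ae_restrict_mem measurableSet_Icc] with t htC htm
  have hGt : |G t| ≤ K := by simpa [Real.norm_eq_abs] using hK t htm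
  calc ‖G t * F t‖ = |G t| * |F t| := by rw [Real.norm_eq_abs, abs_mul]
  _ ≤ K * C := mul_le_mul hGt htC (abs_nonneg _) hK0

lemma form_aemeasurable {n : ℕ} {μ : Measure ℝ} {F : ℝ → Matrix (Fin n) (Fin n) ℝ}
    (hF : ∀ i j, AEMeasurable (fun t => F t i j) μ) (x y : Fin n → ℝ) :
    AEMeasurable (fun t => x ⬝ᵥ F t *ᵥ y) μ := by
  have h1 : (fun t => x ⬝ᵥ F t *ᵥ y) = fun t => ∑ i, ∑ j, x i * (F t i j * y j) :=
    funext fun t => by simp [dotProduct, mulVec, Finset.mul_sum]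
  rw [h1]
  exact Finset.aemeasurable_fun_sum _ fun i _ => Finset.aemeasurable_fun_sum _ fun j _ =>
    (((hF i j).mul_const (y j)).const_mul (x i))

end EopFacts

end Lem2

open Lem2

/-- Lemma 2 of the paper: if `P` solves the coupled matrix inequality `Ξ(P) ≫ 0` uniformly,
then every sufficiently accurate piecewise-constant approximation `P_c` of `P` (with symmetric
positive definite values) is uniformly positive and also satisfies `Ξ(P_c) ≫ 0` uniformly. -/
theorem piecewise_constant_approximation_satisfies_Xi
    (n r : ℕ) (hn : 0 < n) (hr : 0 < r)
    (a b : ℝ) (hab : a < b) (γ : ℝ) (hγ : 0 < γ)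
    (μ : Measure ℝ) (hμ : μ = (volume : Measure ℝ).restrict (Set.Icc a b))
    (A : ℝ → Matrix (Fin n) (Fin n) ℝ) (B : ℝ → Matrix (Fin n) (Fin r) ℝ)
    (C : ℝ → Matrix (Fin r) (Fin n) ℝ)
    (hAcont : ∀ i j, ContinuousOn (fun ℓ => A ℓ i j) (Set.Icc a b))
    (hBcont : ∀ i j, ContinuousOn (fun ℓ => B ℓ i j) (Set.Icc a b))
    (hCcont : ∀ i j, ContinuousOn (fun ℓ => C ℓ i j) (Set.Icc a b))
    (g : ℝ → ℝ → ℝ)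
    (hgcont : ContinuousOn (Function.uncurry g) (Set.Icc a b ×ˢ Set.Icc a b))
    (hgnonneg : ∀ ℓ t, 0 ≤ g ℓ t)
    (hgdensity : ∀ ℓ ∈ Set.Icc a b, ∫ t, g ℓ t ∂μ = 1)
    (P : ℝ → Matrix (Fin n) (Fin n) ℝ)
    (hPmeas : ∀ i j, Measurable fun ℓ => P ℓ i j)
    (hPsymm : ∀ ℓ, (P ℓ).IsSymm)
    (hPbdd : EssBdd μ P) (hPpos : UnifPos μ P)
    (hXi : ∃ δ : ℝ, 0 < δ ∧
      ∀ᵐ ℓ ∂μ, (XiP n r μ g γ A B C P ℓ - δ • 1).PosSemidef) :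
    ∃ ε₀ : ℝ, 0 < ε₀ ∧
      ∀ (M : ℕ) (h : Fin (M + 1) → ℝ), StrictMono h → h 0 = a → h (Fin.last M) = b →
        ∀ Pmat : Fin M → Matrix (Fin n) (Fin n) ℝ, (∀ i, (Pmat i).PosDef) →
          ∀ Pc : ℝ → Matrix (Fin n) (Fin n) ℝ,
            (∀ i, ∀ ℓ ∈ cell M h i, Pc ℓ = Pmat i) →
            (∀ᵐ ℓ ∂μ, ‖P ℓ - Pc ℓ‖ ≤ ε₀) →
            UnifPos μ Pc ∧ ∃ δ' : ℝ, 0 < δ' ∧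
              ∀ᵐ ℓ ∂μ, (XiP n r μ g γ A B C Pc ℓ - δ' • 1).PosSemidef := by
  subst hμ
  set μ' : Measure ℝ := (volume : Measure ℝ).restrict (Set.Icc a b) with hμ'
  obtain ⟨ξ, hξ, hPξ⟩ := hPpos
  obtain ⟨c, hc, hPb⟩ := hPbdd
  obtain ⟨δ, hδ, hXiδ⟩ := hXi
  set ε₀ : ℝ := min (ξ/2) (min (δ/4) (δ*ξ^2/8)) with hε₀def
  have hε₀ : 0 < ε₀ := by
    apply lt_min (by positivity)
    exact lt_min (by positivity) (by positivity)
  have hε1 : ε₀ ≤ ξ/2 := min_le_left _ _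
  have hε2 : ε₀ ≤ δ/4 := le_trans (min_le_right _ _) (min_le_left _ _)
  have hε3 : ε₀ ≤ δ*ξ^2/8 := le_trans (min_le_right _ _) (min_le_right _ _)
  refine ⟨ε₀, hε₀, ?_⟩
  intro M h hmono h0 hlast Pmat hPmat Pc hPc hPcε
  have hM : 0 < M := by
    rcases Nat.eq_zero_or_pos M with hM0 | hM0
    · exfalso
      subst hM0
      have : h 0 = h (Fin.last 0) := rfl
      rw [h0, hlast] at this
      linarith
    · exact hM0
  have hIcc : ∀ t : ℝ, t ∈ Set.Icc a b → t ∈ Set.Icc (h 0) (h (Fin.last M)) := by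
    intro t ht; rwa [h0, hlast]
  -- a.e. entry bounds
  have hDentry : ∀ᵐ t ∂μ', ∀ i' j', |P t i' j' - Pc t i' j'| ≤ ε₀ := by
    filter_upwards [hPcε] with t ht i' j'
    calc |P t i' j' - Pc t i' j'| = |(P t - Pc t) i' j'| := by rw [Matrix.sub_apply]
    _ ≤ ‖P t - Pc t‖ := entry_le_norm _ _ _
    _ ≤ ε₀ := ht
  have hPentry : ∀ᵐ t ∂μ', ∀ i' j', |P t i' j'| ≤ c := by
    filter_upwards [hPb] with t ht i' j'
    exact le_trans (entry_le_norm _ _ _) ht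
  have hPcentry : ∀ᵐ t ∂μ', ∀ i' j', |Pc t i' j'| ≤ c + ε₀ := by
    filter_upwards [hDentry, hPentry] with t h1 h2 i' j'
    have := h1 i' j'
    have := h2 i' j'
    have habs := abs_sub_abs_le_abs_sub (Pc t i' j') (P t i' j')
    rw [abs_sub_comm] at habs
    linarith
  have hPcsym : ∀ᵐ t ∂μ', (Pc t).IsSymm := by
    filter_upwards [MeasureTheory.ae_restrict_mem measurableSet_Icc] with t ht
    obtain ⟨i0, hi0⟩ := cell_cover hM hmono (hIcc t ht)
    rw [hPc i0 t hi0]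
    exact isSymm_of_herm (hPmat i0).1
  have hPcmat : ∀ᵐ t ∂μ', ∃ i0 : Fin M, Pc t = Pmat i0 := by
    filter_upwards [MeasureTheory.ae_restrict_mem measurableSet_Icc] with t ht
    obtain ⟨i0, hi0⟩ := cell_cover hM hmono (hIcc t ht)
    exact ⟨i0, hPc i0 t hi0⟩
  have hPcmeas : ∀ i' j', AEMeasurable (fun t => Pc t i' j') μ' := by
    intro i' j'
    have hFmeas : Measurable
        (fun t => ∑ i : Fin M, (cell M h i).indicator (fun _ => Pmat i i' j') t) :=
      Finset.measurable_sum _ fun i _ =>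
        Measurable.indicator measurable_const (cell_measurable h i)
    refine hFmeas.aemeasurable.congr ?_
    filter_upwards [MeasureTheory.ae_restrict_mem measurableSet_Icc] with t ht
    obtain ⟨i0, hi0⟩ := cell_cover hM hmono (hIcc t ht)
    rw [Finset.sum_eq_single i0]
    · rw [Set.indicator_of_mem hi0, hPc i0 t hi0]
    · intro i _ hne
      exact Set.indicator_of_notMem (fun hmem => hne (cell_disjoint hmono hmem hi0)) _
    · intro habs
      exact absurd (Finset.mem_univ i0) habs
  -- uniform positivity of Pc
  have hPcform : ∀ᵐ t ∂μ', ∀ x : Fin n → ℝ, (ξ/2) * (x ⬝ᵥ x) ≤ x ⬝ᵥ Pc t *ᵥ x := by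
    filter_upwards [hPξ, hPcε] with t h1 h2 x
    have hf1 : ξ * (x ⬝ᵥ x) ≤ x ⬝ᵥ P t *ᵥ x := form_of_psd_sub h1 x
    have hf2 : |x ⬝ᵥ (P t - Pc t) *ᵥ x| ≤ ε₀ * (x ⬝ᵥ x) := by
      refine le_trans (form_le_norm _ x x) ?_
      rw [mul_assoc, Real.mul_self_sqrt (dot_self_nonneg x)]
      exact mul_le_mul_of_nonneg_right h2 (dot_self_nonneg x)
    rw [Matrix.sub_mulVec, dotProduct_sub] at hf2
    have hf3 := (abs_le.mp hf2).2
    have hd := dot_self_nonneg x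
    nlinarith [mul_le_mul_of_nonneg_right hε1 hd]
  have hUnif : UnifPos μ' Pc := by
    refine ⟨ξ/2, by positivity, ?_⟩
    filter_upwards [hPcform, hPcsym] with t h1 h2
    exact psd_of_form (herm_of_isSymm h2) h1
  refine ⟨hUnif, δ/2, by positivity, ?_⟩
  -- main a.e. statement
  filter_upwards [MeasureTheory.ae_restrict_mem measurableSet_Icc, hXiδ, hPcmat, hPcε]
    with ℓ hℓ hXiℓ hPcmatℓ hPcεℓ
  -- continuity and integrability of g ℓ ·
  have hGcont : ContinuousOn (fun t => g ℓ t) (Set.Icc a b) := by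
    have he : (fun t => g ℓ t) = Function.uncurry g ∘ (fun t => (ℓ, t)) := rfl
    rw [he]
    exact hgcont.comp ((Continuous.prodMk_right ℓ).continuousOn) (fun t ht => ⟨hℓ, ht⟩)
  have hGint : Integrable (fun t => g ℓ t) μ' := by
    rw [hμ']
    exact (hGcont.integrableOn_Icc (μ := volume))
  have hintP : ∀ i' j', Integrable (fun t => g ℓ t * P t i' j') μ' := by
    intro i' j'
    exact int_helper hab.le _ _ hGcont (hPmeas i' j').aemeasurable
      (by filter_upwards [hPentry] with t ht; exact ht i' j')
  have hintPc : ∀ i' j', Integrable (fun t => g ℓ t * Pc t i' j') μ' := by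
    intro i' j'
    exact int_helper hab.le _ _ hGcont (hPcmeas i' j')
      (by filter_upwards [hPcentry] with t ht; exact ht i' j')
  have hintD : ∀ i' j', Integrable (fun t => g ℓ t * (P t - Pc t) i' j') μ' := by
    intro i' j'
    have := (hintP i' j').sub (hintPc i' j')
    simpa [Matrix.sub_apply, mul_sub, Pi.sub_def] using this
  set S : Matrix (Fin n) (Fin n) ℝ := Eop μ' g P ℓ with hS
  set Sc : Matrix (Fin n) (Fin n) ℝ := Eop μ' g Pc ℓ with hSc
  -- lower bound for S
  have hSform : ∀ x : Fin n → ℝ, ξ * (x ⬝ᵥ x) ≤ x ⬝ᵥ S *ᵥ x := by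
    intro x
    rw [hS, Eop_form μ' g P ℓ hintP x x]
    have hmeasf : AEMeasurable (fun t => x ⬝ᵥ P t *ᵥ x) μ' :=
      form_aemeasurable (fun i j => (hPmeas i j).aemeasurable) x x
    have hboundf : ∀ᵐ t ∂μ', |x ⬝ᵥ P t *ᵥ x| ≤ c * (x ⬝ᵥ x) := by
      filter_upwards [hPb] with t ht
      refine le_trans (form_le_norm _ x x) ?_
      rw [mul_assoc, Real.mul_self_sqrt (dot_self_nonneg x)]
      exact mul_le_mul_of_nonneg_right ht (dot_self_nonneg x)
    have hint1 : Integrable (fun t => g ℓ t * (x ⬝ᵥ P t *ᵥ x)) μ' :=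
      int_helper hab.le _ _ hGcont hmeasf hboundf
    calc ξ * (x ⬝ᵥ x) = ∫ t, g ℓ t * (ξ * (x ⬝ᵥ x)) ∂μ' := by
          rw [MeasureTheory.integral_mul_const, hgdensity ℓ hℓ, one_mul]
    _ ≤ ∫ t, g ℓ t * (x ⬝ᵥ P t *ᵥ x) ∂μ' := by
          refine MeasureTheory.integral_mono_ae (hGint.mul_const _) hint1 ?_
          filter_upwards [hPξ] with t ht
          exact mul_le_mul_of_nonneg_left (form_of_psd_sub ht x) (hgnonneg ℓ t)
  -- difference bound
  have hSD : ∀ x y : Fin n → ℝ,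
      |x ⬝ᵥ (S - Sc) *ᵥ y| ≤ ε₀ * Real.sqrt (x ⬝ᵥ x) * Real.sqrt (y ⬝ᵥ y) := by
    intro x y
    have hsub : S - Sc = Eop μ' g (fun t => P t - Pc t) ℓ :=
      (Eop_sub μ' g P Pc ℓ hintP hintPc).symm
    rw [hsub, Eop_form μ' g (fun t => P t - Pc t) ℓ hintD x y]
    have hmeasf : AEMeasurable (fun t => x ⬝ᵥ (P t - Pc t) *ᵥ y) μ' :=
      form_aemeasurable (fun i j => by
        have := ((hPmeas i j).aemeasurable.sub (hPcmeas i j))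
        simpa [Matrix.sub_apply, Pi.sub_def] using this) x y
    have hboundf : ∀ᵐ t ∂μ',
        |x ⬝ᵥ (P t - Pc t) *ᵥ y| ≤ ε₀ * Real.sqrt (x ⬝ᵥ x) * Real.sqrt (y ⬝ᵥ y) := by
      filter_upwards [hPcε] with t ht
      refine le_trans (form_le_norm _ x y) ?_
      exact mul_le_mul_of_nonneg_right (mul_le_mul_of_nonneg_right ht (Real.sqrt_nonneg _))
        (Real.sqrt_nonneg _)
    have hint1 : Integrable (fun t => g ℓ t * (x ⬝ᵥ (P t - Pc t) *ᵥ y)) μ' :=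
      int_helper hab.le _ _ hGcont hmeasf hboundf
    calc |∫ t, g ℓ t * (x ⬝ᵥ (P t - Pc t) *ᵥ y) ∂μ'|
        ≤ ∫ t, |g ℓ t| * |x ⬝ᵥ (P t - Pc t) *ᵥ y| ∂μ' := by
          have hni := norm_integral_le_integral_norm (μ := μ')
            (f := fun t => g ℓ t * (x ⬝ᵥ (P t - Pc t) *ᵥ y))
          simpa [Real.norm_eq_abs, abs_mul] using hni
    _ ≤ ∫ t, g ℓ t * (ε₀ * Real.sqrt (x ⬝ᵥ x) * Real.sqrt (y ⬝ᵥ y)) ∂μ' := by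
          refine MeasureTheory.integral_mono_ae
            (hint1.abs.congr (MeasureTheory.ae_of_all _ fun t => abs_mul _ _))
            (hGint.mul_const _) ?_
          filter_upwards [hboundf] with t ht
          rw [abs_of_nonneg (hgnonneg ℓ t)]
          exact mul_le_mul_of_nonneg_left ht (hgnonneg ℓ t)
    _ = ε₀ * Real.sqrt (x ⬝ᵥ x) * Real.sqrt (y ⬝ᵥ y) := by
          rw [MeasureTheory.integral_mul_const, hgdensity ℓ hℓ, one_mul]
  -- symmetry
  have hSsymm : S.IsHermitian :=
    Eop_herm μ' g P ℓ (MeasureTheory.ae_of_all _ fun t => isSymm_of_herm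
      (herm_of_isSymm (hPsymm t)))
  have hScsymm : Sc.IsHermitian := Eop_herm μ' g Pc ℓ hPcsym
  have hScform : ∀ x : Fin n → ℝ, (ξ/2) * (x ⬝ᵥ x) ≤ x ⬝ᵥ Sc *ᵥ x := by
    intro x
    have h1 := hSform x
    have h2 := hSD x x
    rw [mul_assoc, Real.mul_self_sqrt (dot_self_nonneg x)] at h2
    rw [Matrix.sub_mulVec, dotProduct_sub] at h2
    have h3 := (abs_le.mp h2).2
    have hd := dot_self_nonneg x
    nlinarith [mul_le_mul_of_nonneg_right hε1 hd]
  have hSpd : S.PosDef := posDef_of_ge hξ hSsymm hSform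
  have hScpd : Sc.PosDef := posDef_of_ge (by positivity) hScsymm hScform
  have hSdet : IsUnit S.det := hSpd.det_pos.ne'.isUnit
  have hScdet : IsUnit Sc.det := hScpd.det_pos.ne'.isUnit
  have hnormSi : ‖S⁻¹‖ ≤ 1/ξ := inv_norm_le hξ hSsymm hSform
  have hnormSci : ‖Sc⁻¹‖ ≤ 1/(ξ/2) := inv_norm_le (by positivity) hScsymm hScform
  have hnormD : ‖S - Sc‖ ≤ ε₀ := opNorm_le_of_form _ hε₀.le hSD
  have hkey : ‖S⁻¹ - Sc⁻¹‖ ≤ δ/4 := by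
    rw [inv_sub_inv' hSdet hScdet]
    have e1 : ‖S⁻¹ * (Sc - S) * Sc⁻¹‖ ≤ ‖S⁻¹‖ * ‖Sc - S‖ * ‖Sc⁻¹‖ := by
      calc ‖S⁻¹ * (Sc - S) * Sc⁻¹‖ ≤ ‖S⁻¹ * (Sc - S)‖ * ‖Sc⁻¹‖ := Matrix.l2_opNorm_mul _ _
      _ ≤ ‖S⁻¹‖ * ‖Sc - S‖ * ‖Sc⁻¹‖ :=
          mul_le_mul_of_nonneg_right (Matrix.l2_opNorm_mul _ _) (norm_nonneg _)
    refine le_trans e1 ?_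
    have e2 : ‖Sc - S‖ ≤ ε₀ := by rw [norm_sub_rev]; exact hnormD
    have e3 : ‖S⁻¹‖ * ‖Sc - S‖ * ‖Sc⁻¹‖ ≤ (1/ξ) * ε₀ * (1/(ξ/2)) := by
      apply mul_le_mul (mul_le_mul hnormSi e2 (norm_nonneg _) (by positivity)) hnormSci
        (norm_nonneg _) (by positivity)
    refine le_trans e3 ?_
    have e4 : (1/ξ) * ε₀ * (1/(ξ/2)) = 2*ε₀/ξ^2 := by
      field_simp
    rw [e4, div_le_iff₀ (by positivity : (0:ℝ) < ξ^2)]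
    nlinarith [hε3]
  have hXiPform := fun x => form_of_psd_sub hXiℓ x
  have hXiPherm : (XiP n r μ' g γ A B C P ℓ).IsHermitian := by
    have hh := hXiℓ.1.add (smul_one_herm δ)
    simpa using hh
  set D1 : Matrix (Fin n) (Fin n) ℝ := Sc⁻¹ - S⁻¹ with hD1
  set D2 : Matrix (Fin n) (Fin n) ℝ := Pc ℓ - P ℓ with hD2
  set Dd := Matrix.fromBlocks
      (Matrix.fromBlocks D1 0 0 (0 : Matrix (Fin r) (Fin r) ℝ)) 0 0
      (Matrix.fromBlocks D2 0 0 (0 : Matrix (Fin r) (Fin r) ℝ)) with hDd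
  have hkeyid : XiP n r μ' g γ A B C Pc ℓ = XiP n r μ' g γ A B C P ℓ + Dd := by
    rw [hDd, hD1, hD2]
    unfold XiP
    rw [← hS, ← hSc]
    rw [Matrix.fromBlocks_add, Matrix.fromBlocks_add, Matrix.fromBlocks_add]
    simp only [add_zero, zero_add]
    rw [Matrix.fromBlocks_inj]
    refine ⟨?_, rfl, rfl, ?_⟩
    · rw [Matrix.fromBlocks_inj]
      refine ⟨by abel, rfl, rfl, rfl⟩
    · rw [Matrix.fromBlocks_inj]
      refine ⟨by abel, rfl, rfl, rfl⟩
  have hD1h : D1.IsHermitian := hScpd.isHermitian.inv.sub hSpd.isHermitian.inv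
  have hD2h : D2.IsHermitian := by
    obtain ⟨i0, hi0⟩ := hPcmatℓ
    rw [hD2, hi0]
    exact (hPmat i0).1.sub (herm_of_isSymm (hPsymm ℓ))
  have hDdh : Dd.IsHermitian := by
    rw [hDd]
    unfold Matrix.IsHermitian
    rw [Matrix.fromBlocks_conjTranspose, Matrix.fromBlocks_conjTranspose,
      Matrix.fromBlocks_conjTranspose]
    rw [hD1h, hD2h]
    simp
  have hXiPcherm : (XiP n r μ' g γ A B C Pc ℓ).IsHermitian := by
    rw [hkeyid]
    exact hXiPherm.add hDdh
  have hDdform : ∀ x : ((Fin n ⊕ Fin r) ⊕ (Fin n ⊕ Fin r)) → ℝ, x ⬝ᵥ Dd *ᵥ x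
      = ((x ∘ Sum.inl) ∘ Sum.inl) ⬝ᵥ D1 *ᵥ ((x ∘ Sum.inl) ∘ Sum.inl)
        + ((x ∘ Sum.inr) ∘ Sum.inl) ⬝ᵥ D2 *ᵥ ((x ∘ Sum.inr) ∘ Sum.inl) := by
    intro x
    rw [hDd, blockdiag_form, blockdiag_form, blockdiag_form]
    simp
  have hfinal : ∀ x : ((Fin n ⊕ Fin r) ⊕ (Fin n ⊕ Fin r)) → ℝ,
      (δ/2) * (x ⬝ᵥ x) ≤ x ⬝ᵥ XiP n r μ' g γ A B C Pc ℓ *ᵥ x := by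
    intro x
    rw [hkeyid, Matrix.add_mulVec, dotProduct_add, hDdform x]
    have hx11 : ((x ∘ Sum.inl) ∘ Sum.inl) ⬝ᵥ ((x ∘ Sum.inl) ∘ Sum.inl) ≤ x ⬝ᵥ x := by
      rw [dot_split x x, dot_split (x ∘ Sum.inl) (x ∘ Sum.inl)]
      have := dot_self_nonneg (x ∘ Sum.inr)
      have := dot_self_nonneg ((x ∘ Sum.inl) ∘ Sum.inr)
      linarith
    have hx31 : ((x ∘ Sum.inr) ∘ Sum.inl) ⬝ᵥ ((x ∘ Sum.inr) ∘ Sum.inl) ≤ x ⬝ᵥ x := by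
      rw [dot_split x x, dot_split (x ∘ Sum.inr) (x ∘ Sum.inr)]
      have := dot_self_nonneg (x ∘ Sum.inl)
      have := dot_self_nonneg ((x ∘ Sum.inr) ∘ Sum.inr)
      linarith
    have hb1 : |((x ∘ Sum.inl) ∘ Sum.inl) ⬝ᵥ D1 *ᵥ ((x ∘ Sum.inl) ∘ Sum.inl)|
        ≤ (δ/4) * (x ⬝ᵥ x) := by
      refine le_trans (form_le_norm _ _ _) ?_
      rw [mul_assoc, Real.mul_self_sqrt (dot_self_nonneg _)]
      have hn : ‖D1‖ ≤ δ/4 := by rw [hD1, norm_sub_rev]; exact hkey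
      calc ‖D1‖ * (((x ∘ Sum.inl) ∘ Sum.inl) ⬝ᵥ ((x ∘ Sum.inl) ∘ Sum.inl))
          ≤ (δ/4) * (((x ∘ Sum.inl) ∘ Sum.inl) ⬝ᵥ ((x ∘ Sum.inl) ∘ Sum.inl)) :=
            mul_le_mul_of_nonneg_right hn (dot_self_nonneg _)
      _ ≤ (δ/4) * (x ⬝ᵥ x) := mul_le_mul_of_nonneg_left hx11 (by positivity)
    have hb2 : |((x ∘ Sum.inr) ∘ Sum.inl) ⬝ᵥ D2 *ᵥ ((x ∘ Sum.inr) ∘ Sum.inl)|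
        ≤ (δ/4) * (x ⬝ᵥ x) := by
      refine le_trans (form_le_norm _ _ _) ?_
      rw [mul_assoc, Real.mul_self_sqrt (dot_self_nonneg _)]
      have hn : ‖D2‖ ≤ δ/4 := by
        rw [hD2, norm_sub_rev]
        exact le_trans hPcεℓ hε2
      calc ‖D2‖ * (((x ∘ Sum.inr) ∘ Sum.inl) ⬝ᵥ ((x ∘ Sum.inr) ∘ Sum.inl))
          ≤ (δ/4) * (((x ∘ Sum.inr) ∘ Sum.inl) ⬝ᵥ ((x ∘ Sum.inr) ∘ Sum.inl)) :=
            mul_le_mul_of_nonneg_right hn (dot_self_nonneg _)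
      _ ≤ (δ/4) * (x ⬝ᵥ x) := mul_le_mul_of_nonneg_left hx31 (by positivity)
    have h0 := hXiPform x
    have hab1 := (abs_le.mp hb1).1
    have hab2 := (abs_le.mp hb2).1
    linarith
  exact psd_of_form hXiPcherm hfinal

end
end
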